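/- arXiv:2407.04008 — 8 statements merged into one kernel-verified Lean document; each statement's English description precedes it below -/
import Mathlib

section
/- Every solution of the Robertson model with initial value (x₀, y₀, z₀) in the non-negative orthant ℝ³₊ exists globally in forward time and remains for all t ≥ 0 in the compact set K = {(x,y,z) ∈ ℝ³₊ : x + y + z = c}, where c = x₀ + y₀ + z₀. -/
/-!
Clamping every coordinate to `[0, c]` makes the Robertson field globally Lipschitz and bounded,
so the clamped system has a global solution. The clamped field is quasi-positive: when `x < 0`
it gives `ẋ = k₃ ȳ z̄ ≥ 0` (bars denote clamped coordinates), when `y < 0` it gives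
`ẏ = k₁ x̄ ≥ 0`, and always `ż ≥ 0`; so the solution stays in the orthant. The components of the
field sum to zero, so `x + y + z = c` throughout. Then the solution lies in `K`, where the clamp
is the identity, and it solves the Robertson system. Since the Robertson field is locally
Lipschitz, any solution on `[0, T]` coincides with this one.
-/

open Set Filter
open scoped NNReal

theorem nonneg_of_hasDerivAt_of_deriv_nonneg_of_neg {f f' : ℝ → ℝ} {a t : ℝ}
    (hf : ∀ s, HasDerivAt f (f' s) s) (ha : 0 ≤ f a) (hf' : ∀ s, f s < 0 → 0 ≤ f' s)
    (ht : a ≤ t) : 0 ≤ f t := by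
  suffices ∀ δ > 0, -f t ≤ δ by
    by_contra! h
    linarith [this (-f t / 2) (by linarith)]
  intro δ hδ
  set ε := δ / (t - a + 1)
  have hε : 0 < ε := by positivity
  have hB (s : ℝ) : HasDerivAt (fun s => ε * (s - a + 1)) ε s := by
    simpa using ((hasDerivAt_id s).sub_const a |>.add_const 1).const_mul ε
  -- `-f` can only reach the line `ε (s - a + 1) > 0` where `f < 0`, and there `-f` is non-increasing.
  have hfence := image_le_of_deriv_right_lt_deriv_boundary' (f := fun s => -f s) (b := t)
    (fun s _ => (hf s).continuousAt.neg.continuousWithinAt)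
    (fun s _ => (hf s).neg.hasDerivWithinAt) (by simp only [sub_self, zero_add, mul_one]; linarith)
    (fun s _ => (hB s).continuousAt.continuousWithinAt) (fun s _ => (hB s).hasDerivWithinAt)
    (fun s hs hs_eq => ?_) ⟨ht, le_rfl⟩
  · have hεt : ε * (t - a + 1) = δ := div_mul_cancel₀ δ (by linarith)
    simpa [hεt] using hfence
  · have hfs : f s < 0 := by
      have : 0 < ε * (s - a + 1) := mul_pos hε (by linarith [hs.1])
      linarith
    linarith [hf' s hfs]

section Prod

variable {E F : Type*} [NormedAddCommGroup E] [NormedSpace ℝ E] [NormedAddCommGroup F]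
  [NormedSpace ℝ F] {u : ℝ → E × F} {u' : E × F} {t : ℝ}

theorem HasDerivAt.fst (h : HasDerivAt u u' t) : HasDerivAt (fun s => (u s).1) u'.1 t :=
  (ContinuousLinearMap.fst ℝ E F).hasFDerivAt.comp_hasDerivAt t h

theorem HasDerivAt.snd (h : HasDerivAt u u' t) : HasDerivAt (fun s => (u s).2) u'.2 t :=
  (ContinuousLinearMap.snd ℝ E F).hasFDerivAt.comp_hasDerivAt t h

end Prod

section ODE

variable {E : Type*} [NormedAddCommGroup E] [NormedSpace ℝ E] {v : E → E}

theorem ODE_solution_unique_of_locallyLipschitz (hv : LocallyLipschitz v)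
    {f g : ℝ → E} {a b : ℝ}
    (hf : ContinuousOn f (Icc a b)) (hf' : ∀ t ∈ Ico a b, HasDerivWithinAt f (v (f t)) (Ici t) t)
    (hg : ContinuousOn g (Icc a b)) (hg' : ∀ t ∈ Ico a b, HasDerivWithinAt g (v (g t)) (Ici t) t)
    (ha : f a = g a) : EqOn f g (Icc a b) := by
  set s := f '' Icc a b ∪ g '' Icc a b
  have hs : IsCompact s :=
    (isCompact_Icc.image_of_continuousOn hf).union (isCompact_Icc.image_of_continuousOn hg)
  obtain ⟨K, hK⟩ := hv.locallyLipschitzOn.exists_lipschitzOnWith_of_compact hs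
  exact ODE_solution_unique_of_mem_Icc_right (v := fun _ => v) (s := fun _ => s) (fun _ _ => hK)
    hf hf' (fun t ht => .inl ⟨t, Ico_subset_Icc_self ht, rfl⟩)
    hg hg' (fun t ht => .inr ⟨t, Ico_subset_Icc_self ht, rfl⟩) ha

variable [CompleteSpace E] {K L : ℝ≥0}

theorem exists_forall_mem_Icc_hasDerivWithinAt_of_lipschitzWith_of_norm_le
    (hv : LipschitzWith K v) (hL : ∀ p, ‖v p‖ ≤ L) (p₀ : E) (T : ℝ≥0) :
    ∃ u : ℝ → E, u 0 = p₀ ∧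
      ∀ t ∈ Icc (-T : ℝ) T, HasDerivWithinAt u (v (u t)) (Icc (-T : ℝ) T) t :=
  IsPicardLindelof.exists_eq_forall_mem_Icc_hasDerivWithinAt₀
    (t₀ := ⟨0, by simp⟩) (a := L * T) (L := L)
    (IsPicardLindelof.of_time_independent (fun p _ => hL p) hv.lipschitzOnWith (by simp))

theorem exists_forall_hasDerivAt_of_lipschitzWith_of_norm_le
    (hv : LipschitzWith K v) (hL : ∀ p, ‖v p‖ ≤ L) (p₀ : E) :
    ∃ u : ℝ → E, u 0 = p₀ ∧ ∀ t, HasDerivAt u (v (u t)) t := by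
  choose u hu₀ hu using fun n : ℕ =>
    exists_forall_mem_Icc_hasDerivWithinAt_of_lipschitzWith_of_norm_le hv hL p₀ (n + 1)
  push_cast at hu
  have hu' (n : ℕ) {t : ℝ} (ht : t ∈ Ioo (-(n + 1 : ℝ)) (n + 1)) :
      HasDerivAt (u n) (v (u n t)) t :=
    (hu n t (Ioo_subset_Icc_self ht)).hasDerivAt (Icc_mem_nhds ht.1 ht.2)
  have hagree {m n : ℕ} (hmn : m ≤ n) : EqOn (u m) (u n) (Icc (-(m + 1 : ℝ)) (m + 1)) := by
    have hmn' : (m : ℝ) ≤ n := by exact_mod_cast hmn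
    have hm : (0 : ℝ) ≤ m := m.cast_nonneg
    have hsub : Icc (-(m + 1 : ℝ)) (m + 1) ⊆ Icc (-(n + 1 : ℝ)) (n + 1) :=
      Icc_subset_Icc (by linarith) (by linarith)
    exact ODE_solution_unique_of_mem_Icc (v := fun _ => v) (s := fun _ => univ)
      (fun _ _ => hv.lipschitzOnWith) (t₀ := 0) ⟨by linarith, by linarith⟩
      (fun t ht => (hu m t ht).continuousWithinAt) (fun t ht => hu' m ht) (fun _ _ => trivial)
      (fun t ht => ((hu n t (hsub ht)).continuousWithinAt).mono hsub)
      (fun t ht => hu' n ⟨by linarith [ht.1], by linarith [ht.2]⟩) (fun _ _ => trivial)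
      (by rw [hu₀, hu₀])
  have mem_Ioo_ceil (t : ℝ) : t ∈ Ioo (-(⌈|t|⌉₊ + 1 : ℝ)) (⌈|t|⌉₊ + 1) := by
    have := abs_le.1 (Nat.le_ceil |t|)
    constructor <;> linarith
  have hglue {n : ℕ} {t : ℝ} (ht : t ∈ Icc (-(n + 1 : ℝ)) (n + 1)) : u ⌈|t|⌉₊ t = u n t := by
    rw [hagree (le_max_left _ n) (Ioo_subset_Icc_self (mem_Ioo_ceil t)),
      hagree (le_max_right ⌈|t|⌉₊ n) ht]
  refine ⟨fun t => u ⌈|t|⌉₊ t, (hglue (n := 0) (by norm_num)).trans (hu₀ 0), fun t => ?_⟩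
  have ht := mem_Ioo_ceil t
  exact (hu' _ ht).congr_of_eventuallyEq
    (eventually_of_mem (Icc_mem_nhds ht.1 ht.2) fun s hs => hglue hs)

end ODE

section Robertson

variable (k₁ k₂ k₃ : ℝ)

def robertsonField (p : ℝ × ℝ × ℝ) : ℝ × ℝ × ℝ :=
  (-k₁ * p.1 + k₃ * p.2.1 * p.2.2, k₁ * p.1 - k₂ * p.2.1 ^ 2 - k₃ * p.2.1 * p.2.2, k₂ * p.2.1 ^ 2)

def scaledSimplex (c : ℝ) : Set (ℝ × ℝ × ℝ) :=
  {p | 0 ≤ p.1 ∧ 0 ≤ p.2.1 ∧ 0 ≤ p.2.2 ∧ p.1 + p.2.1 + p.2.2 = c}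

def clampBox (c : ℝ) (p : ℝ × ℝ × ℝ) : ℝ × ℝ × ℝ :=
  (max 0 (min p.1 c), max 0 (min p.2.1 c), max 0 (min p.2.2 c))

theorem contDiff_robertsonField : ContDiff ℝ 1 (robertsonField k₁ k₂ k₃) := by
  unfold robertsonField
  fun_prop

theorem robertsonField_sum (p : ℝ × ℝ × ℝ) :
    (robertsonField k₁ k₂ k₃ p).1 + (robertsonField k₁ k₂ k₃ p).2.1 +
      (robertsonField k₁ k₂ k₃ p).2.2 = 0 := by
  simp only [robertsonField]
  ring

theorem lipschitzWith_clampBox (c : ℝ) : LipschitzWith 1 (clampBox c) := by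
  have h : LipschitzWith 1 fun a : ℝ => max 0 (min a c) := (LipschitzWith.id.min_const c).const_max 0
  have := (h.comp LipschitzWith.prod_fst).prodMk
    ((h.comp (LipschitzWith.prod_fst.comp LipschitzWith.prod_snd)).prodMk
      (h.comp (LipschitzWith.prod_snd.comp LipschitzWith.prod_snd)))
  simp only [mul_one, max_self] at this
  exact this

theorem clampBox_mem_Icc {c : ℝ} (hc : 0 ≤ c) (p : ℝ × ℝ × ℝ) :
    clampBox c p ∈ Icc 0 (c, c, c) := by
  simp [clampBox, Prod.le_def, hc]

theorem clampBox_eq_self {c : ℝ} {p : ℝ × ℝ × ℝ} (hp : p ∈ scaledSimplex c) :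
    clampBox c p = p := by
  obtain ⟨hx, hy, hz, hs⟩ := hp
  simp only [clampBox, min_eq_left (show p.1 ≤ c by linarith),
    min_eq_left (show p.2.1 ≤ c by linarith), min_eq_left (show p.2.2 ≤ c by linarith),
    max_eq_right hx, max_eq_right hy, max_eq_right hz]

variable {k₁ k₂ k₃}

theorem robertsonField_clampBox_nonneg_of_neg (hk₁ : 0 ≤ k₁) (hk₂ : 0 ≤ k₂) (hk₃ : 0 ≤ k₃)
    (c : ℝ) (p : ℝ × ℝ × ℝ) :
    (p.1 < 0 → 0 ≤ (robertsonField k₁ k₂ k₃ (clampBox c p)).1) ∧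
    (p.2.1 < 0 → 0 ≤ (robertsonField k₁ k₂ k₃ (clampBox c p)).2.1) ∧
    0 ≤ (robertsonField k₁ k₂ k₃ (clampBox c p)).2.2 := by
  have hclamp {a : ℝ} (ha : a < 0) : max 0 (min a c) = 0 := max_eq_left (min_le_of_left_le ha.le)
  refine ⟨fun hx => ?_, fun hy => ?_, ?_⟩
  · simp only [robertsonField, clampBox, hclamp hx, mul_zero, zero_add]
    positivity
  · simp only [robertsonField, clampBox, hclamp hy, zero_pow two_ne_zero, mul_zero, zero_mul,
      sub_zero]
    positivity
  · simp only [robertsonField]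
    positivity

theorem exists_hasDerivAt_robertsonField_comp_clampBox {c : ℝ} (hc : 0 ≤ c)
    (p₀ : ℝ × ℝ × ℝ) :
    ∃ u : ℝ → ℝ × ℝ × ℝ, u 0 = p₀ ∧
      ∀ t, HasDerivAt u (robertsonField k₁ k₂ k₃ (clampBox c (u t))) t := by
  have hF := contDiff_robertsonField k₁ k₂ k₃
  have hbox : IsCompact (Icc (0 : ℝ × ℝ × ℝ) (c, c, c)) := isCompact_Icc
  obtain ⟨K, hK⟩ := hF.locallyLipschitz.locallyLipschitzOn.exists_lipschitzOnWith_of_compact hbox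
  obtain ⟨L, hL⟩ := hbox.exists_bound_of_continuousOn hF.continuous.continuousOn
  have hv : LipschitzWith (K * 1) (robertsonField k₁ k₂ k₃ ∘ clampBox c) :=
    lipschitzOnWith_univ.1 <|
      hK.comp (lipschitzWith_clampBox c).lipschitzOnWith fun p _ => clampBox_mem_Icc hc p
  exact exists_forall_hasDerivAt_of_lipschitzWith_of_norm_le hv (L := L.toNNReal)
    (fun p => (hL _ (clampBox_mem_Icc hc p)).trans (Real.le_coe_toNNReal L)) p₀

theorem exists_hasDerivAt_robertsonField_mem_scaledSimplex
    (hk₁ : 0 ≤ k₁) (hk₂ : 0 ≤ k₂) (hk₃ : 0 ≤ k₃) {c : ℝ} {p₀ : ℝ × ℝ × ℝ}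
    (hp₀ : p₀ ∈ scaledSimplex c) :
    ∃ u : ℝ → ℝ × ℝ × ℝ, u 0 = p₀ ∧
      ∀ t ≥ 0, HasDerivAt u (robertsonField k₁ k₂ k₃ (u t)) t ∧ u t ∈ scaledSimplex c := by
  obtain ⟨hx₀, hy₀, hz₀, hc₀⟩ := hp₀
  obtain ⟨u, hu₀, hu⟩ := exists_hasDerivAt_robertsonField_comp_clampBox (k₁ := k₁) (k₂ := k₂)
    (k₃ := k₃) (by linarith : 0 ≤ c) p₀
  have hsum (t : ℝ) : (u t).1 + (u t).2.1 + (u t).2.2 = c := by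
    have hderiv (s : ℝ) : HasDerivAt (fun s => (u s).1 + (u s).2.1 + (u s).2.2) 0 s := by
      have := ((hu s).fst.add (hu s).snd.fst).add (hu s).snd.snd
      rwa [robertsonField_sum] at this
    rw [is_const_of_deriv_eq_zero (fun s => (hderiv s).differentiableAt)
      (fun s => (hderiv s).deriv) t 0, hu₀, hc₀]
  have hpos (s : ℝ) := robertsonField_clampBox_nonneg_of_neg hk₁ hk₂ hk₃ c (u s)
  have hmem {t : ℝ} (ht : 0 ≤ t) : u t ∈ scaledSimplex c :=
    ⟨nonneg_of_hasDerivAt_of_deriv_nonneg_of_neg (fun s => (hu s).fst)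
        (by rwa [hu₀]) (fun s => (hpos s).1) ht,
      nonneg_of_hasDerivAt_of_deriv_nonneg_of_neg (fun s => (hu s).snd.fst)
        (by rwa [hu₀]) (fun s => (hpos s).2.1) ht,
      nonneg_of_hasDerivAt_of_deriv_nonneg_of_neg (fun s => (hu s).snd.snd)
        (by rwa [hu₀]) (fun s _ => (hpos s).2.2) ht,
      hsum t⟩
  refine ⟨u, hu₀, fun t ht => ⟨?_, hmem ht⟩⟩
  simpa only [clampBox_eq_self (hmem ht)] using hu t

theorem mem_scaledSimplex_of_hasDerivWithinAt_robertsonField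
    (hk₁ : 0 ≤ k₁) (hk₂ : 0 ≤ k₂) (hk₃ : 0 ≤ k₃) {c T : ℝ} {w : ℝ → ℝ × ℝ × ℝ}
    (hw₀ : w 0 ∈ scaledSimplex c)
    (hw : ∀ t ∈ Icc 0 T, HasDerivWithinAt w (robertsonField k₁ k₂ k₃ (w t)) (Icc 0 T) t) :
    ∀ t ∈ Icc 0 T, w t ∈ scaledSimplex c := by
  obtain ⟨u, hu₀, hu⟩ := exists_hasDerivAt_robertsonField_mem_scaledSimplex hk₁ hk₂ hk₃ hw₀
  have hwu : EqOn w u (Icc 0 T) :=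
    ODE_solution_unique_of_locallyLipschitz (contDiff_robertsonField k₁ k₂ k₃).locallyLipschitz
      (fun t ht => (hw t ht).continuousWithinAt)
      (fun t ht => (hw t (Ico_subset_Icc_self ht)).mono_of_mem_nhdsWithin
        (Icc_mem_nhdsGE_of_mem ht))
      (fun t ht => (hu t ht.1).1.continuousAt.continuousWithinAt)
      (fun t ht => (hu t ht.1).1.hasDerivWithinAt) hu₀.symm
  intro t ht
  rw [hwu ht]
  exact (hu t ht.1).2

end Robertson

/-- Every solution of the Robertson model with initial value in the non-negative
orthant exists globally in forward time and remains for all t ≥ 0 in the compact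
set K = {(x,y,z) ∈ ℝ³₊ : x + y + z = c}, where c = x₀ + y₀ + z₀.  This is stated
as: (i) there exists a global forward solution with this initial value staying in K,
and (ii) every solution with this initial value, on any forward interval of
existence [0,T], stays in K. -/
theorem robertson_global_existence_in_K
    (k₁ k₂ k₃ : ℝ) (hk₁ : 0 < k₁) (hk₂ : 0 < k₂) (hk₃ : 0 < k₃)
    (x₀ y₀ z₀ : ℝ) (hx₀ : 0 ≤ x₀) (hy₀ : 0 ≤ y₀) (hz₀ : 0 ≤ z₀) :
    (∃ x y z : ℝ → ℝ, x 0 = x₀ ∧ y 0 = y₀ ∧ z 0 = z₀ ∧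
      (∀ t ≥ (0 : ℝ), HasDerivAt x (-k₁ * x t + k₃ * y t * z t) t) ∧
      (∀ t ≥ (0 : ℝ), HasDerivAt y (k₁ * x t - k₂ * (y t) ^ 2 - k₃ * y t * z t) t) ∧
      (∀ t ≥ (0 : ℝ), HasDerivAt z (k₂ * (y t) ^ 2) t) ∧
      (∀ t ≥ (0 : ℝ), 0 ≤ x t ∧ 0 ≤ y t ∧ 0 ≤ z t ∧
        x t + y t + z t = x₀ + y₀ + z₀)) ∧
    (∀ T : ℝ, ∀ x y z : ℝ → ℝ, x 0 = x₀ → y 0 = y₀ → z 0 = z₀ →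
      (∀ t ∈ Set.Icc (0 : ℝ) T,
        HasDerivWithinAt x (-k₁ * x t + k₃ * y t * z t) (Set.Icc 0 T) t) →
      (∀ t ∈ Set.Icc (0 : ℝ) T,
        HasDerivWithinAt y (k₁ * x t - k₂ * (y t) ^ 2 - k₃ * y t * z t) (Set.Icc 0 T) t) →
      (∀ t ∈ Set.Icc (0 : ℝ) T,
        HasDerivWithinAt z (k₂ * (y t) ^ 2) (Set.Icc 0 T) t) →
      ∀ t ∈ Set.Icc (0 : ℝ) T, 0 ≤ x t ∧ 0 ≤ y t ∧ 0 ≤ z t ∧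
        x t + y t + z t = x₀ + y₀ + z₀) := by
  have hp₀ : ((x₀, y₀, z₀) : ℝ × ℝ × ℝ) ∈ scaledSimplex (x₀ + y₀ + z₀) := ⟨hx₀, hy₀, hz₀, rfl⟩
  constructor
  · obtain ⟨u, hu₀, hu⟩ :=
      exists_hasDerivAt_robertsonField_mem_scaledSimplex hk₁.le hk₂.le hk₃.le hp₀
    exact ⟨fun t => (u t).1, fun t => (u t).2.1, fun t => (u t).2.2,
      by simp [hu₀], by simp [hu₀], by simp [hu₀],
      fun t ht => (hu t ht).1.fst, fun t ht => (hu t ht).1.snd.fst,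
      fun t ht => (hu t ht).1.snd.snd, fun t ht => (hu t ht).2⟩
  · intro T x y z hx hy hz hdx hdy hdz
    exact mem_scaledSimplex_of_hasDerivWithinAt_robertsonField (w := fun t => (x t, y t, z t))
      hk₁.le hk₂.le hk₃.le (by simpa [hx, hy, hz] using hp₀)
      fun t ht => (hdx t ht).prodMk ((hdy t ht).prodMk (hdz t ht))
end

section
/- Every solution of the Robertson model with initial value (x₀, y₀, z₀) in the non-negative orthant ℝ³₊ converges as t → ∞ to the equilibrium (0, 0, c), where c = x₀ + y₀ + z₀. -/
/-!
The total mass `x + y + z` is conserved and `z` is nondecreasing. The orthant is forward invariant: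
on every compact time interval the squared negative parts `x⁻ ^ 2 + y⁻ ^ 2` satisfy a linear
differential inequality and vanish at time `0`, so they vanish by Grönwall. Hence all coordinates
stay in `[0, c]`, so `z` converges and `y` is Lipschitz; as `ż = k₂ y²` has finite integral,
`y → 0`.
Conservation then makes `x` converge to `c - lim z` while `ẋ → -k₁ (c - lim z)`; a convergent
function cannot have a nonzero limiting derivative, so `x → 0` and `z → c`.
-/

open Set Filter Topology NNReal

lemma negPart_mul_self {R : Type*} [CommRing R] [LinearOrder R] [IsOrderedRing R] (a : R) :
    a⁻ * a = -a⁻ ^ 2 := by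
  rcases le_total a 0 with h | h
  · rw [negPart_eq_neg.2 h]; ring
  · rw [negPart_eq_zero.2 h]; simp

lemma hasDerivAt_negPart_sq (u : ℝ) : HasDerivAt (fun v : ℝ => v⁻ ^ 2) (-2 * u⁻) u := by
  rcases lt_trichotomy u 0 with hu | rfl | hu
  · have hloc : (fun v : ℝ => v⁻ ^ 2) =ᶠ[𝓝 u] fun v => v ^ 2 := by
      filter_upwards [Iio_mem_nhds hu] with v hv
      rw [negPart_eq_neg.2 (le_of_lt hv), neg_sq]
    rw [negPart_eq_neg.2 hu.le]
    simpa [mul_comm] using (hasDerivAt_pow 2 u).congr_of_eventuallyEq hloc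
  · rw [hasDerivAt_iff_isLittleO_nhds_zero]
    have hbound : (fun v : ℝ => v⁻ ^ 2) =O[𝓝 0] fun v => v ^ 2 :=
      Asymptotics.IsBigO.of_bound 1 <| Eventually.of_forall fun v => by
        rw [one_mul, norm_pow, norm_pow]
        gcongr
        rcases le_total v 0 with hv | hv
        · rw [negPart_eq_neg.2 hv, norm_neg]
        · rw [negPart_eq_zero.2 hv, norm_zero]; exact norm_nonneg _
    simpa using hbound.trans_isLittleO (Asymptotics.isLittleO_pow_id one_lt_two)
  · have hloc : (fun v : ℝ => v⁻ ^ 2) =ᶠ[𝓝 u] fun _ => 0 := by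
      filter_upwards [Ioi_mem_nhds hu] with v hv
      rw [negPart_eq_zero.2 (le_of_lt hv), zero_pow two_ne_zero]
    rw [negPart_eq_zero.2 hu.le]
    simpa using (hasDerivAt_const u (0 : ℝ)).congr_of_eventuallyEq hloc

lemma monotoneOn_Ici_of_hasDerivAt_nonneg {f f' : ℝ → ℝ} {a : ℝ}
    (hf : ∀ t ≥ a, HasDerivAt f (f' t) t) (hf' : ∀ t > a, 0 ≤ f' t) : MonotoneOn f (Ici a) :=
  monotoneOn_of_hasDerivWithinAt_nonneg (convex_Ici a)
    (fun t ht => (hf t ht).continuousAt.continuousWithinAt)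
    (fun t ht => (hf t (interior_subset ht)).hasDerivWithinAt)
    (fun t ht => hf' t (by rwa [interior_Ici] at ht))

lemma exists_tendsto_of_monotoneOn_Ici {f : ℝ → ℝ} {a b : ℝ} (hf : MonotoneOn f (Ici a))
    (hb : ∀ t ≥ a, f t ≤ b) : ∃ l, Tendsto f atTop (𝓝 l) := by
  have hmono : Monotone fun t : Ici a => f t := fun s t hst => hf s.2 t.2 hst
  have hbdd : BddAbove (range fun t : Ici a => f t) := ⟨b, by rintro _ ⟨t, rfl⟩; exact hb t t.2⟩
  exact ⟨_, tendsto_comp_val_Ici_atTop.1 (tendsto_atTop_ciSup hmono hbdd)⟩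

lemma exists_mem_Ioo_sub_eq_mul_of_hasDerivAt {f f' : ℝ → ℝ} {a t δ : ℝ}
    (hf : ∀ s ≥ a, HasDerivAt f (f' s) s) (ht : a ≤ t) (hδ : 0 < δ) :
    ∃ ξ ∈ Ioo t (t + δ), f (t + δ) - f t = δ * f' ξ := by
  obtain ⟨ξ, hξ, hslope⟩ := exists_hasDerivAt_eq_slope f f' (lt_add_of_pos_right t hδ)
    (fun s hs => (hf s (ht.trans hs.1)).continuousAt.continuousWithinAt)
    (fun s hs => hf s (ht.trans hs.1.le))
  refine ⟨ξ, hξ, ?_⟩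
  rw [hslope, add_sub_cancel_left]
  field_simp

theorem eq_zero_of_tendsto_of_tendsto_deriv {f f' : ℝ → ℝ} {a l L : ℝ}
    (hf : ∀ t ≥ a, HasDerivAt f (f' t) t) (hfl : Tendsto f atTop (𝓝 l))
    (hf'L : Tendsto f' atTop (𝓝 L)) : L = 0 := by
  choose! ξ hξ hξeq using fun t (ht : a ≤ t) =>
    exists_mem_Ioo_sub_eq_mul_of_hasDerivAt hf ht one_pos
  have hξ_top : Tendsto ξ atTop atTop :=
    tendsto_atTop_mono' _ ((eventually_ge_atTop a).mono fun t ht => (hξ t ht).1.le) tendsto_id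
  have hstep : Tendsto (fun t => f (t + 1) - f t) atTop (𝓝 0) := by
    simpa using (hfl.comp (tendsto_atTop_add_const_right _ 1 tendsto_id)).sub hfl
  refine tendsto_nhds_unique ((hf'L.comp hξ_top).congr' ?_) hstep
  filter_upwards [eventually_ge_atTop a] with t ht
  simp [hξeq t ht]

theorem tendsto_zero_of_lipschitzOnWith_of_sq_le_deriv {f g g' : ℝ → ℝ} {a l κ : ℝ} {B : ℝ≥0}
    (hf : LipschitzOnWith B f (Ici a)) (hg : ∀ t ≥ a, HasDerivAt g (g' t) t) (hκ : 0 < κ)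
    (hg' : ∀ t ≥ a, κ * f t ^ 2 ≤ g' t) (hgl : Tendsto g atTop (𝓝 l)) :
    Tendsto f atTop (𝓝 0) := by
  rw [Metric.tendsto_atTop]
  intro ε hε
  set δ : ℝ := ε / (2 * (B + 1)) with hδ_def
  have hδ : 0 < δ := by positivity
  have hBδ : B * δ ≤ ε / 2 := by
    rw [hδ_def, mul_div_assoc', div_le_div_iff₀ (by positivity) two_pos]
    nlinarith [B.2]
  have hgain : Tendsto (fun t => g (t + δ) - g t) atTop (𝓝 0) := by
    simpa using (hgl.comp (tendsto_atTop_add_const_right _ δ tendsto_id)).sub hgl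
  obtain ⟨N, hN⟩ := Metric.tendsto_atTop.1 hgain (κ * δ * (ε / 2) ^ 2) (by positivity)
  refine ⟨max N a, fun t ht => ?_⟩
  have hta : a ≤ t := le_of_max_le_right ht
  -- If `|f t| ≥ ε`, then `|f| ≥ ε / 2` on `[t, t + δ]`, so `g` gains at least `κ δ (ε / 2)²` there.
  by_contra! hft
  rw [Real.dist_eq, sub_zero] at hft
  obtain ⟨ξ, hξ, hξeq⟩ := exists_mem_Ioo_sub_eq_mul_of_hasDerivAt hg hta hδ
  have hξa : a ≤ ξ := hta.trans hξ.1.le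
  have hfξ : ε / 2 ≤ |f ξ| := by
    have hclose : |f ξ - f t| ≤ ε / 2 := by
      calc |f ξ - f t| = dist (f ξ) (f t) := (Real.dist_eq _ _).symm
        _ ≤ B * dist ξ t := hf.dist_le_mul ξ hξa t hta
        _ ≤ B * δ := by
          gcongr
          rw [Real.dist_eq, abs_of_pos (by linarith [hξ.1])]
          linarith [hξ.2]
        _ ≤ ε / 2 := hBδ
    linarith [abs_sub_abs_le_abs_sub (f t) (f ξ), abs_sub_comm (f ξ) (f t)]
  have hsq : (ε / 2) ^ 2 ≤ f ξ ^ 2 := by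
    rw [← sq_abs (f ξ)]; gcongr
  have hgrow : κ * δ * (ε / 2) ^ 2 ≤ g (t + δ) - g t := by
    rw [hξeq]
    calc κ * δ * (ε / 2) ^ 2 ≤ κ * δ * f ξ ^ 2 := by gcongr
      _ = δ * (κ * f ξ ^ 2) := by ring
      _ ≤ δ * g' ξ := by gcongr; exact hg' ξ hξa
  have := hN t (le_of_max_le_left ht)
  rw [Real.dist_eq, sub_zero] at this
  linarith [le_abs_self (g (t + δ) - g t)]

structure IsRobertsonSolution (k₁ k₂ k₃ : ℝ) (x y z : ℝ → ℝ) : Prop where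
  hasDerivAt_x : ∀ t ≥ (0 : ℝ), HasDerivAt x (-k₁ * x t + k₃ * y t * z t) t
  hasDerivAt_y : ∀ t ≥ (0 : ℝ), HasDerivAt y (k₁ * x t - k₂ * y t ^ 2 - k₃ * y t * z t) t
  hasDerivAt_z : ∀ t ≥ (0 : ℝ), HasDerivAt z (k₂ * y t ^ 2) t

theorem robertson_negPart_sq_deriv_le {k₁ k₂ k₃ X Y Z M : ℝ} (hk₁ : 0 ≤ k₁) (hk₂ : 0 ≤ k₂)
    (hk₃ : 0 ≤ k₃) (hZ : 0 ≤ Z) (hZM : Z ≤ M) (hYM : |Y| ≤ M) :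
    -2 * X⁻ * (-k₁ * X + k₃ * Y * Z) + -2 * Y⁻ * (k₁ * X - k₂ * Y ^ 2 - k₃ * Y * Z) ≤
      (k₁ + k₃ * M + 2 * k₂ * M) * (X⁻ ^ 2 + Y⁻ ^ 2) := by
  have hbM : Y⁻ ≤ M := by
    rcases le_total Y 0 with hY | hY
    · rw [negPart_eq_neg.2 hY]; exact (neg_le_abs Y).trans hYM
    · rw [negPart_eq_zero.2 hY]; exact (abs_nonneg Y).trans hYM
  set a := X⁻
  set b := Y⁻
  have ha : 0 ≤ a := negPart_nonneg X
  have hb : 0 ≤ b := negPart_nonneg Y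
  have hXa : -X ≤ a := neg_le_negPart X
  have hYb : -Y ≤ b := neg_le_negPart Y
  have hM : 0 ≤ M := hZ.trans hZM
  calc -2 * a * (-k₁ * X + k₃ * Y * Z) + -2 * b * (k₁ * X - k₂ * Y ^ 2 - k₃ * Y * Z)
      = -2 * k₁ * a ^ 2 + 2 * k₃ * Z * a * (-Y) + 2 * k₁ * b * (-X) + 2 * k₂ * b ^ 2 * (-Y)
          - 2 * k₃ * Z * b ^ 2 := by
        linear_combination
          (2 * k₁) * negPart_mul_self X + (2 * k₂ * Y + 2 * k₃ * Z) * negPart_mul_self Y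
    _ ≤ 2 * k₃ * M * a * b + 2 * k₁ * a * b + 2 * k₂ * M * b ^ 2 := by
        have h1 : k₃ * Z * a * (-Y) ≤ k₃ * M * a * b := by
          calc k₃ * Z * a * (-Y) ≤ k₃ * Z * a * b := by gcongr
            _ ≤ k₃ * M * a * b := by gcongr
        have h2 : k₁ * b * (-X) ≤ k₁ * b * a := by gcongr
        have h3 : k₂ * b ^ 2 * (-Y) ≤ k₂ * b ^ 2 * M := by gcongr; exact hYb.trans hbM
        nlinarith [mul_nonneg hk₁ (sq_nonneg a), mul_nonneg (mul_nonneg hk₃ hZ) (sq_nonneg b)]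
    _ ≤ (k₁ + k₃ * M + 2 * k₂ * M) * (a ^ 2 + b ^ 2) := by
        nlinarith [mul_nonneg hk₁ (sq_nonneg (a - b)),
          mul_nonneg (mul_nonneg hk₃ hM) (sq_nonneg (a - b)),
          mul_nonneg (mul_nonneg hk₂ hM) (sq_nonneg a)]

namespace IsRobertsonSolution

variable {k₁ k₂ k₃ : ℝ} {x y z : ℝ → ℝ}

theorem add_add_eq (h : IsRobertsonSolution k₁ k₂ k₃ x y z) {t : ℝ} (ht : 0 ≤ t) :
    x t + y t + z t = x 0 + y 0 + z 0 := by
  have hsum (s : ℝ) (hs : 0 ≤ s) : HasDerivAt (fun s => x s + y s + z s) 0 s :=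
    (((h.hasDerivAt_x s hs).add (h.hasDerivAt_y s hs)).add (h.hasDerivAt_z s hs)).congr_deriv
      (by ring)
  exact constant_of_has_deriv_right_zero
    (fun s hs => (hsum s hs.1).continuousAt.continuousWithinAt)
    (fun s hs => (hsum s hs.1).hasDerivWithinAt) t ⟨ht, le_rfl⟩

theorem monotoneOn_z (h : IsRobertsonSolution k₁ k₂ k₃ x y z) (hk₂ : 0 ≤ k₂) :
    MonotoneOn z (Ici 0) :=
  monotoneOn_Ici_of_hasDerivAt_nonneg h.hasDerivAt_z fun _ _ => by positivity

theorem nonneg (h : IsRobertsonSolution k₁ k₂ k₃ x y z) (hk₁ : 0 ≤ k₁) (hk₂ : 0 ≤ k₂)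
    (hk₃ : 0 ≤ k₃) (h0 : 0 ≤ x 0 ∧ 0 ≤ y 0 ∧ 0 ≤ z 0) {T : ℝ} (hT : 0 ≤ T) :
    0 ≤ x T ∧ 0 ≤ y T ∧ 0 ≤ z T := by
  obtain ⟨hx0, hy0, hz0⟩ := h0
  have hz (t : ℝ) (ht : 0 ≤ t) : 0 ≤ z t := hz0.trans (h.monotoneOn_z hk₂ self_mem_Ici ht ht)
  obtain ⟨M, hM⟩ := (isCompact_Icc (a := (0 : ℝ)) (b := T)).exists_bound_of_continuousOn
    (f := fun t => (y t, z t)) fun t ht => ((h.hasDerivAt_y t ht.1).continuousAt.prodMk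
      (h.hasDerivAt_z t ht.1).continuousAt).continuousWithinAt
  have hderiv (t : ℝ) (ht : 0 ≤ t) : HasDerivAt (fun t => (x t)⁻ ^ 2 + (y t)⁻ ^ 2)
      (-2 * (x t)⁻ * (-k₁ * x t + k₃ * y t * z t) +
        -2 * (y t)⁻ * (k₁ * x t - k₂ * y t ^ 2 - k₃ * y t * z t)) t :=
    ((hasDerivAt_negPart_sq _).comp t (h.hasDerivAt_x t ht)).add
      ((hasDerivAt_negPart_sq _).comp t (h.hasDerivAt_y t ht))
  have hgronwall := le_gronwallBound_of_liminf_deriv_right_le (δ := 0) (ε := 0)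
    (K := k₁ + k₃ * M + 2 * k₂ * M)
    (fun t ht => (hderiv t ht.1).continuousAt.continuousWithinAt)
    (fun t ht _ hr => (hderiv t ht.1).hasDerivWithinAt.liminf_right_slope_le hr)
    (by simp [negPart_eq_zero.2 hx0, negPart_eq_zero.2 hy0])
    (fun t ht => by
      rw [add_zero]
      exact robertson_negPart_sq_deriv_le hk₁ hk₂ hk₃ (hz t ht.1)
        ((le_abs_self _).trans ((norm_snd_le _).trans (hM t (Ico_subset_Icc_self ht))))
        ((norm_fst_le _).trans (hM t (Ico_subset_Icc_self ht))))
    T ⟨hT, le_rfl⟩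
  rw [gronwallBound_ε0_δ0] at hgronwall
  have hxT : (x T)⁻ = 0 := by nlinarith [sq_nonneg (x T)⁻, sq_nonneg (y T)⁻]
  have hyT : (y T)⁻ = 0 := by nlinarith [sq_nonneg (x T)⁻, sq_nonneg (y T)⁻]
  exact ⟨negPart_eq_zero.1 hxT, negPart_eq_zero.1 hyT, hz T hT⟩

theorem mem_Icc (h : IsRobertsonSolution k₁ k₂ k₃ x y z) (hk₁ : 0 ≤ k₁) (hk₂ : 0 ≤ k₂)
    (hk₃ : 0 ≤ k₃) (h0 : 0 ≤ x 0 ∧ 0 ≤ y 0 ∧ 0 ≤ z 0) {t : ℝ} (ht : 0 ≤ t) :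
    x t ∈ Icc 0 (x 0 + y 0 + z 0) ∧ y t ∈ Icc 0 (x 0 + y 0 + z 0) ∧
      z t ∈ Icc 0 (x 0 + y 0 + z 0) := by
  obtain ⟨hx, hy, hz⟩ := h.nonneg hk₁ hk₂ hk₃ h0 ht
  have hsum := h.add_add_eq ht
  exact ⟨⟨hx, by linarith⟩, ⟨hy, by linarith⟩, ⟨hz, by linarith⟩⟩

theorem exists_lipschitzOnWith_y (h : IsRobertsonSolution k₁ k₂ k₃ x y z) (hk₁ : 0 ≤ k₁)
    (hk₂ : 0 ≤ k₂) (hk₃ : 0 ≤ k₃) (h0 : 0 ≤ x 0 ∧ 0 ≤ y 0 ∧ 0 ≤ z 0) :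
    ∃ B, LipschitzOnWith B y (Ici 0) := by
  set c := x 0 + y 0 + z 0
  refine ⟨(k₁ * c + (k₂ + k₃) * c ^ 2).toNNReal,
    (convex_Ici 0).lipschitzOnWith_of_nnnorm_hasDerivWithin_le
      (fun t ht => (h.hasDerivAt_y t ht).hasDerivWithinAt) fun t ht => ?_⟩
  obtain ⟨⟨hx, hxc⟩, ⟨hy, hyc⟩, ⟨hz, hzc⟩⟩ := h.mem_Icc hk₁ hk₂ hk₃ h0 ht
  have hy2 : y t ^ 2 ≤ c ^ 2 := by gcongr
  have hyz : y t * z t ≤ c ^ 2 := by rw [sq]; exact mul_le_mul hyc hzc hz (hy.trans hyc)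
  rw [← NNReal.coe_le_coe, coe_nnnorm, Real.norm_eq_abs, Real.coe_toNNReal',
    le_max_iff, abs_le]
  left
  constructor <;> nlinarith [mul_nonneg hk₂ (sq_nonneg (y t)), mul_nonneg hk₃ (mul_nonneg hy hz)]

end IsRobertsonSolution

/-- Every solution of the Robertson model with initial value (x₀, y₀, z₀) in the
non-negative orthant converges as t → ∞ to the equilibrium (0, 0, c), where
c = x₀ + y₀ + z₀. -/
theorem robertson_convergence_to_equilibrium
    (k₁ k₂ k₃ : ℝ) (hk₁ : 0 < k₁) (hk₂ : 0 < k₂) (hk₃ : 0 < k₃)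
    (x y z : ℝ → ℝ)
    (hx : ∀ t ≥ (0 : ℝ), HasDerivAt x (-k₁ * x t + k₃ * y t * z t) t)
    (hy : ∀ t ≥ (0 : ℝ), HasDerivAt y (k₁ * x t - k₂ * (y t) ^ 2 - k₃ * y t * z t) t)
    (hz : ∀ t ≥ (0 : ℝ), HasDerivAt z (k₂ * (y t) ^ 2) t)
    (h0 : 0 ≤ x 0 ∧ 0 ≤ y 0 ∧ 0 ≤ z 0) :
    Filter.Tendsto (fun t => (x t, y t, z t)) Filter.atTop
      (nhds ((0 : ℝ), (0 : ℝ), x 0 + y 0 + z 0)) := by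
  have h : IsRobertsonSolution k₁ k₂ k₃ x y z := ⟨hx, hy, hz⟩
  set c := x 0 + y 0 + z 0
  obtain ⟨ℓ, hzℓ⟩ := exists_tendsto_of_monotoneOn_Ici (h.monotoneOn_z hk₂.le)
    fun t ht => (h.mem_Icc hk₁.le hk₂.le hk₃.le h0 ht).2.2.2
  obtain ⟨B, hB⟩ := h.exists_lipschitzOnWith_y hk₁.le hk₂.le hk₃.le h0
  have hy0 : Tendsto y atTop (𝓝 0) :=
    tendsto_zero_of_lipschitzOnWith_of_sq_le_deriv hB hz hk₂ (fun _ _ => le_rfl) hzℓ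
  have hxℓ : Tendsto x atTop (𝓝 (c - ℓ)) := by
    have hmass : (fun t => c - (y t + z t)) =ᶠ[atTop] x := by
      filter_upwards [eventually_ge_atTop 0] with t ht
      linarith [h.add_add_eq ht]
    simpa using (tendsto_const_nhds.sub (hy0.add hzℓ)).congr' hmass
  have hx' : Tendsto (fun t => -k₁ * x t + k₃ * y t * z t) atTop (𝓝 (-k₁ * (c - ℓ))) := by
    simpa using (hxℓ.const_mul (-k₁)).add ((hy0.const_mul k₃).mul hzℓ)
  have hℓ : c - ℓ = 0 :=
    (mul_eq_zero.1 (eq_zero_of_tendsto_of_tendsto_deriv hx hxℓ hx')).resolve_left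
      (neg_ne_zero.2 hk₁.ne')
  rw [hℓ] at hxℓ
  rw [sub_eq_zero.1 hℓ]
  exact hxℓ.prodMk_nhds (hy0.prodMk_nhds hzℓ)
end

section
/- Every periodic solution of the planar reduced Robertson system that is contained in the non-negative quadrant {(y,z) : y ≥ 0, z ≥ 0} is constant; i.e., the system has no nonconstant periodic solutions there. -/
/-!
Since `ż = k₂ y² ≥ 0`, the coordinate `z` is monotone; a monotone periodic function is constant,
so `ż ≡ 0`, which forces `y ≡ 0`.
-/

namespace Function.Periodic

variable {α : Type*} [AddCommGroup α] [LinearOrder α] [IsOrderedAddMonoid α] [Archimedean α]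
  {c : α}

theorem le_of_monotone {β : Type*} [Preorder β] {f : α → β} (h : Periodic f c) (hc : 0 < c)
    (hf : Monotone f) (x y : α) : f x ≤ f y := by
  obtain ⟨n, hn⟩ := Archimedean.arch (x - y) hc
  calc f x ≤ f (y + n • c) := hf (sub_le_iff_le_add'.mp hn)
    _ = f y := h.nsmul n y

theorem eq_of_monotone {β : Type*} [PartialOrder β] {f : α → β} (h : Periodic f c) (hc : 0 < c)
    (hf : Monotone f) (x y : α) : f x = f y :=
  le_antisymm (h.le_of_monotone hc hf x y) (h.le_of_monotone hc hf y x)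

end Function.Periodic

theorem robertson_planar_no_nonconstant_periodic_general
    (k₂ : ℝ) (hk₂ : 0 < k₂)
    (y z : ℝ → ℝ) (T : ℝ) (hT : 0 < T)
    (hz : ∀ t : ℝ, HasDerivAt z (k₂ * (y t) ^ 2) t)
    (hzper : Function.Periodic z T) :
    ∀ t : ℝ, y t = y 0 ∧ z t = z 0 := by
  have hz_mono : Monotone z := monotone_of_hasDerivAt_nonneg hz fun t => by positivity
  have hz_const : z = fun _ => z 0 := funext fun t => hzper.eq_of_monotone hT hz_mono t 0
  have hy_zero : ∀ t, y t = 0 := by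
    intro t
    have hderiv_zero : k₂ * y t ^ 2 = 0 :=
      (hz t).unique (by rw [hz_const]; exact hasDerivAt_const t (z 0))
    simpa [hk₂.ne'] using hderiv_zero
  exact fun t => ⟨by rw [hy_zero t, hy_zero 0], congrFun hz_const t⟩

/-- Every periodic solution of the planar reduced Robertson system
ẏ = k₁(c − y − z) − k₂y² − k₃yz, ż = k₂y² that is contained in the
non-negative quadrant is constant. -/
theorem robertson_planar_no_nonconstant_periodic
    (k₁ k₂ k₃ c : ℝ) (hk₁ : 0 < k₁) (hk₂ : 0 < k₂) (hk₃ : 0 < k₃) (hc : 0 < c)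
    (y z : ℝ → ℝ) (T : ℝ) (hT : 0 < T)
    (hy : ∀ t : ℝ, HasDerivAt y (k₁ * (c - y t - z t) - k₂ * (y t) ^ 2 - k₃ * y t * z t) t)
    (hz : ∀ t : ℝ, HasDerivAt z (k₂ * (y t) ^ 2) t)
    (hyper : Function.Periodic y T) (hzper : Function.Periodic z T)
    (hquad : ∀ t : ℝ, 0 ≤ y t ∧ 0 ≤ z t) :
    ∀ t : ℝ, y t = y 0 ∧ z t = z 0 :=
  robertson_planar_no_nonconstant_periodic_general k₂ hk₂ y z T hT hz hzper
end

section
/- Let ε₂ ≥ 0 and c > 0. The reduced flow ż = y² on the attracting critical branch z = (c − y²)/(1 + ε₂y) pulls back to the scalar ODE ẏ = −y²(1 + ε₂y)²/(2y + ε₂y² + ε₂c). The solution of this scalar ODE with initial value y(0) = √c exists for all t ≥ 0, satisfies 0 < y(t) ≤ √c for all t ≥ 0, and converges to 0 as t → ∞; consequently the corresponding point (y(t), (c − y(t)²)/(1 + ε₂y(t))) on the critical branch converges to the equilibrium (0, c). -/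
/-!
Along the branch `z = (c - y²)/(1 + ε₂y)` one has `dz/dy = -(2y + ε₂y² + ε₂c)/(1 + ε₂y)²`, so
`ż = y²` is exactly the chain rule for `ẏ = -F(y)`, `F(y) = y²(1 + ε₂y)²/(2y + ε₂y² + ε₂c)`.
This ODE is separable: if `G' = 1/F` on `(0, ∞)`, then `y(t) = G⁻¹(G(√c) - t)`. Since
`1/F(u) ≥ 2/((1 + ε₂)² u)` on `(0, 1]`, `G` tends to `-∞` at `0⁺`, so this inverse exists for all
`t ≥ 0`; it decreases from `√c` and tends to `0`, and the branch point tends to `(0, c)`.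
-/

open Real Filter Set Function Topology

section SeparationOfVariables

variable {G : ℝ → ℝ} {m : ℝ}

theorem Iio_subset_image_Ioo_of_tendsto_atBot (hGc : ContinuousOn G (Ioi m))
    (hbot : Tendsto G (𝓝[>] m) atBot) {b : ℝ} (hb : m < b) : Iio (G b) ⊆ G '' Ioo m b := by
  intro v hv
  obtain ⟨u, hGu, hmu, hub⟩ :=
    (Eventually.and (hbot.eventually (eventually_lt_atBot v)) (Ioo_mem_nhdsGT hb)).exists
  obtain ⟨w, hw, rfl⟩ := intermediate_value_Ico hub.le
    (hGc.mono fun x hx => lt_of_lt_of_le hmu hx.1) ⟨hGu.le, hv⟩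
  exact ⟨w, ⟨lt_of_lt_of_le hmu hw.1, hw.2⟩, rfl⟩

theorem invFunOn_mem_Ioo_of_lt (hmono : StrictMonoOn G (Ioi m)) (hGc : ContinuousOn G (Ioi m))
    (hbot : Tendsto G (𝓝[>] m) atBot) {b v : ℝ} (hb : m < b) (hv : v < G b) :
    invFunOn G (Ioi m) v ∈ Ioo m b ∧ G (invFunOn G (Ioi m) v) = v := by
  obtain ⟨u, hu, rfl⟩ := Iio_subset_image_Ioo_of_tendsto_atBot hGc hbot hb hv
  rw [hmono.injOn.leftInvOn_invFunOn (Ioo_subset_Ioi_self hu)]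
  exact ⟨hu, rfl⟩

theorem continuousAt_invFunOn_of_lt (hmono : StrictMonoOn G (Ioi m))
    (hGc : ContinuousOn G (Ioi m)) (hbot : Tendsto G (𝓝[>] m) atBot) {b v : ℝ} (hb : m < b)
    (hv : v < G b) : ContinuousAt (invFunOn G (Ioi m)) v := by
  have hspec := fun w (hw : w ∈ Iio (G b)) => invFunOn_mem_Ioo_of_lt hmono hGc hbot hb hw
  have hinv_mono : StrictMonoOn (invFunOn G (Ioi m)) (Iio (G b)) := by
    intro w hw w' hw' hww'
    rw [← hmono.lt_iff_lt (Ioo_subset_Ioi_self (hspec w hw).1)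
      (Ioo_subset_Ioi_self (hspec w' hw').1), (hspec w hw).2, (hspec w' hw').2]
    exact hww'
  refine hinv_mono.continuousAt_of_image_mem_nhds (Iio_mem_nhds hv)
    (mem_of_superset (Ioo_mem_nhds (hspec v hv).1.1 (hspec v hv).1.2) ?_)
  intro u hu
  exact ⟨G u, hmono (Ioo_subset_Ioi_self hu) hb hu.2,
    hmono.injOn.leftInvOn_invFunOn (Ioo_subset_Ioi_self hu)⟩

theorem exists_solution_of_primitive_tendsto_atBot {f : ℝ → ℝ}
    (hG : ∀ u > m, HasDerivAt G (f u)⁻¹ u) (hf : ∀ u > m, 0 < f u)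
    (hbot : Tendsto G (𝓝[>] m) atBot) {a : ℝ} (ha : m < a) :
    ∃ y : ℝ → ℝ, y 0 = a ∧ (∀ t ≥ (0 : ℝ), HasDerivAt y (-f (y t)) t) ∧
      (∀ t ≥ (0 : ℝ), m < y t ∧ y t ≤ a) ∧ Tendsto y atTop (𝓝 m) := by
  have hGc : ContinuousOn G (Ioi m) := fun u hu => (hG u hu).continuousAt.continuousWithinAt
  have hmono : StrictMonoOn G (Ioi m) := by
    refine strictMonoOn_of_hasDerivWithinAt_pos (f' := fun u => (f u)⁻¹) (convex_Ioi m) hGc ?_ ?_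
      <;> rw [interior_Ioi]
    · exact fun u hu => (hG u hu).hasDerivWithinAt
    · exact fun u hu => inv_pos.2 (hf u hu)
  have hL : G a - G (a + 1) < 0 :=
    sub_neg.2 (hmono ha (show m < a + 1 by linarith) (by linarith))
  have hspec : ∀ t > G a - G (a + 1), invFunOn G (Ioi m) (G a - t) ∈ Ioo m (a + 1) ∧
      G (invFunOn G (Ioi m) (G a - t)) = G a - t :=
    fun t ht => invFunOn_mem_Ioo_of_lt hmono hGc hbot (by linarith) (by linarith)
  refine ⟨fun t => invFunOn G (Ioi m) (G a - t), ?_, fun t ht => ?_, fun t ht => ?_, ?_⟩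
  · simpa only [sub_zero] using hmono.injOn.leftInvOn_invFunOn ha
  · obtain ⟨hyt, -⟩ := hspec t (by linarith)
    have hcont : ContinuousAt (fun s => invFunOn G (Ioi m) (G a - s)) t :=
      (continuousAt_invFunOn_of_lt hmono hGc hbot (b := a + 1) (by linarith)
        (by linarith)).comp (continuous_sub_left (G a)).continuousAt
    have hinv := HasDerivAt.of_local_left_inverse hcont ((hG _ hyt.1).const_sub (G a))
      (neg_ne_zero.2 (inv_pos.2 (hf _ hyt.1)).ne') (by
        filter_upwards [eventually_gt_nhds (hL.trans_le ht)] with s hs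
        rw [(hspec s hs).2]
        ring)
    simpa only [neg_inv, inv_inv] using hinv
  · obtain ⟨hyt, hGyt⟩ := hspec t (by linarith)
    refine ⟨hyt.1, ?_⟩
    rw [← hmono.le_iff_le hyt.1 ha, hGyt]
    linarith
  · refine tendsto_order.2 ⟨fun b hb => ?_, fun b hb => ?_⟩
    · filter_upwards [eventually_gt_atTop 0] with t ht
      exact hb.trans (hspec t (by linarith)).1.1
    · filter_upwards [eventually_gt_atTop 0, eventually_gt_atTop (G a - G b)] with t ht htb
      obtain ⟨hyt, hGyt⟩ := hspec t (by linarith)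
      rw [← hmono.lt_iff_lt hyt.1 hb, hGyt]
      linarith

end SeparationOfVariables

theorem tendsto_nhdsGT_zero_atBot_of_div_le_deriv {G g : ℝ → ℝ} {k : ℝ} (hk : 0 < k)
    (hG : ∀ u ∈ Ioc (0 : ℝ) 1, HasDerivAt G (g u) u) (hg : ∀ u ∈ Ioc (0 : ℝ) 1, k / u ≤ g u) :
    Tendsto G (𝓝[>] 0) atBot := by
  have hmono : MonotoneOn (fun u => G u - k * log u) (Ioc 0 1) := by
    refine monotoneOn_of_hasDerivWithinAt_nonneg (f' := fun u => g u - k / u) (convex_Ioc 0 1)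
      (fun u hu => ((hG u hu).continuousAt.sub
        ((continuousAt_log hu.1.ne').const_mul k)).continuousWithinAt) (fun u hu => ?_)
      (fun u hu => sub_nonneg.2 (hg u (interior_subset hu)))
    rw [interior_Ioc] at hu ⊢
    refine (((hG u (Ioo_subset_Ioc_self hu)).sub
      ((hasDerivAt_log hu.1.ne').const_mul k)).congr_deriv ?_).hasDerivWithinAt
    rw [div_eq_mul_inv]
  have hle : ∀ u ∈ Ioc (0 : ℝ) 1, G u ≤ G 1 + k * log u := fun u hu => by
    have := hmono hu ⟨one_pos, le_rfl⟩ hu.2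
    simp only [log_one, mul_zero, sub_zero] at this
    linarith
  refine tendsto_atBot_mono' _ (Filter.mem_of_superset (Ioc_mem_nhdsGT one_pos) hle) ?_
  exact tendsto_atBot_add_const_left _ _ (tendsto_log_nhdsGT_zero.const_mul_atBot hk)

noncomputable def criticalBranch (ε c u : ℝ) : ℝ := (c - u ^ 2) / (1 + ε * u)

noncomputable def reducedField (ε c u : ℝ) : ℝ :=
  u ^ 2 * (1 + ε * u) ^ 2 / (2 * u + ε * u ^ 2 + ε * c)

/-- Obtained from `1 / reducedField ε c` by partial fractions. -/
noncomputable def reducedTime (ε c u : ℝ) : ℝ :=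
  (2 - 2 * ε ^ 2 * c) * (log u - log (1 + ε * u)) - ε * c / u + (1 - ε ^ 2 * c) / (1 + ε * u)

variable {ε c : ℝ}

theorem hasDerivAt_criticalBranch {u : ℝ} (hu : 1 + ε * u ≠ 0) :
    HasDerivAt (criticalBranch ε c) (-(2 * u + ε * u ^ 2 + ε * c) / (1 + ε * u) ^ 2) u := by
  have hden : HasDerivAt (fun u => 1 + ε * u) ε u := by
    simpa using ((hasDerivAt_id u).const_mul ε).const_add 1
  exact (((hasDerivAt_pow 2 u).const_sub c).div hden hu).congr_deriv (by norm_num; ring)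

theorem hasDerivAt_criticalBranch_comp {y : ℝ → ℝ} {t : ℝ} (h₁ : 1 + ε * y t ≠ 0)
    (hN : 2 * y t + ε * y t ^ 2 + ε * c ≠ 0) (hy : HasDerivAt y (-reducedField ε c (y t)) t) :
    HasDerivAt (fun s => criticalBranch ε c (y s)) (y t ^ 2) t := by
  refine ((hasDerivAt_criticalBranch (c := c) h₁).comp t hy).congr_deriv ?_
  rw [reducedField, neg_div, neg_mul_neg, div_mul_div_comm,
    div_eq_iff (mul_ne_zero (pow_ne_zero 2 h₁) hN)]
  ring

theorem hasDerivAt_reducedTime (hε : 0 ≤ ε) {u : ℝ} (hu : 0 < u) :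
    HasDerivAt (reducedTime ε c) (reducedField ε c u)⁻¹ u := by
  have h₁ : 0 < 1 + ε * u := by positivity
  have hden : HasDerivAt (fun u => 1 + ε * u) ε u := by
    simpa using ((hasDerivAt_id u).const_mul ε).const_add 1
  have := ((((hasDerivAt_log hu.ne').sub ((hasDerivAt_log h₁.ne').comp u hden)).const_mul
    (2 - 2 * ε ^ 2 * c)).sub ((hasDerivAt_inv hu.ne').const_mul (ε * c))).add
    (((hasDerivAt_inv h₁.ne').comp u hden).const_mul (1 - ε ^ 2 * c))
  refine this.congr_deriv ?_
  rw [reducedField, inv_div]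
  field_simp
  ring

theorem div_le_inv_reducedField (hε : 0 ≤ ε) (hc : 0 ≤ c) {u : ℝ} (hu : u ∈ Ioc (0 : ℝ) 1) :
    2 / (1 + ε) ^ 2 / u ≤ (reducedField ε c u)⁻¹ := by
  obtain ⟨hu0, hu1⟩ := hu
  rw [reducedField, inv_div]
  have h₁ : 1 + ε * u ≤ 1 + ε := by nlinarith
  calc 2 / (1 + ε) ^ 2 / u = 2 * u / (u ^ 2 * (1 + ε) ^ 2) := by field_simp
    _ ≤ 2 * u / (u ^ 2 * (1 + ε * u) ^ 2) := by gcongr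
    _ ≤ _ := by gcongr; nlinarith [mul_nonneg hε (sq_nonneg u), mul_nonneg hε hc]

theorem tendsto_reducedTime_nhdsGT_zero (hε : 0 ≤ ε) (hc : 0 ≤ c) :
    Tendsto (reducedTime ε c) (𝓝[>] 0) atBot :=
  tendsto_nhdsGT_zero_atBot_of_div_le_deriv (by positivity)
    (fun _ hu => hasDerivAt_reducedTime hε hu.1) (fun _ hu => div_le_inv_reducedField hε hc hu)

/-- In region B₂: (i) the reduced flow ż = y² on the attracting critical branch
z = (c − y²)/(1 + ε₂y) pulls back to the scalar ODE
ẏ = −y²(1 + ε₂y)²/(2y + ε₂y² + ε₂c), i.e. any positive solution of the scalar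
ODE induces a solution of ż = y² along the branch; (ii) the solution of the
scalar ODE with y(0) = √c exists for all t ≥ 0, satisfies 0 < y(t) ≤ √c, tends
to 0, and the corresponding point on the critical branch tends to (0, c). -/
theorem regionB2_reduced_flow
    (ε₂ c : ℝ) (hε₂ : 0 ≤ ε₂) (hc : 0 < c) :
    (∀ y : ℝ → ℝ, (∀ t : ℝ, 0 < y t) →
      (∀ t : ℝ, HasDerivAt y
        (-(y t) ^ 2 * (1 + ε₂ * y t) ^ 2 / (2 * y t + ε₂ * (y t) ^ 2 + ε₂ * c)) t) →
      ∀ t : ℝ, HasDerivAt (fun s => (c - (y s) ^ 2) / (1 + ε₂ * y s)) ((y t) ^ 2) t) ∧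
    (∃ y : ℝ → ℝ, y 0 = Real.sqrt c ∧
      (∀ t ≥ (0 : ℝ), HasDerivAt y
        (-(y t) ^ 2 * (1 + ε₂ * y t) ^ 2 / (2 * y t + ε₂ * (y t) ^ 2 + ε₂ * c)) t) ∧
      (∀ t ≥ (0 : ℝ), 0 < y t ∧ y t ≤ Real.sqrt c) ∧
      Filter.Tendsto y Filter.atTop (nhds 0) ∧
      Filter.Tendsto (fun t => (y t, (c - (y t) ^ 2) / (1 + ε₂ * y t)))
        Filter.atTop (nhds ((0 : ℝ), c))) := by
  have hfield (u : ℝ) : -u ^ 2 * (1 + ε₂ * u) ^ 2 / (2 * u + ε₂ * u ^ 2 + ε₂ * c) =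
      -reducedField ε₂ c u := by
    rw [reducedField, neg_mul, neg_div]
  simp only [hfield]
  refine ⟨fun y hy hode t => ?_, ?_⟩
  · have hyt := hy t
    exact hasDerivAt_criticalBranch_comp (by positivity) (by positivity) (hode t)
  obtain ⟨y, hy0, hode, hbound, hlim⟩ :=
    exists_solution_of_primitive_tendsto_atBot (fun u hu => hasDerivAt_reducedTime hε₂ hu)
      (fun u hu => by rw [reducedField]; positivity) (tendsto_reducedTime_nhdsGT_zero hε₂ hc.le)
      (sqrt_pos.2 hc)
  refine ⟨y, hy0, hode, hbound, hlim, hlim.prodMk_nhds ?_⟩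
  simpa [criticalBranch, comp_def] using
    ((hasDerivAt_criticalBranch (ε := ε₂) (c := c) (u := 0) (by simp)).continuousAt.tendsto.comp
      hlim)
end

section
/- Let ε ≥ 0 and c > 0 and consider the planar system z₁' = s₁ + 2z₁(s₁ + z₁ + 1 + s₁εc), s₁' = s₁(s₁ + z₁ + 1 + s₁εc). The set {(z₁, s₁) : s₁ ≥ 0, s₁ + z₁ ≤ 0} is forward invariant: every solution starting in this set remains in it for all forward times in its interval of existence. In particular, along the line s₁ = −z₁ one has (s₁ + z₁)' = −s₁²εc ≤ 0. -/
/-! The line `s₁ = 0` is invariant because `s₁' = s₁ · F`, and on the line `s₁ + z₁ = 0` the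
vector field points weakly into the half-plane since `(s₁ + z₁)' = (s₁ + z₁)(2F - s₁) - εc s₁²`,
where `F = s₁ + z₁ + 1 + εc s₁`. Both claims are instances of one comparison principle: if
`w' = w G + r` with `G` continuous and `r ≤ 0`, then `w · exp (-∫ G)` is antitone, so `w` stays
nonpositive once it starts nonpositive. -/

open Set

theorem ContinuousOn.hasDerivWithinAt_integral_Icc {a b t : ℝ} {G : ℝ → ℝ}
    (hG : ContinuousOn G (Icc a b)) (ht : t ∈ Icc a b) :
    HasDerivWithinAt (fun u => ∫ x in a..u, G x) (G t) (Icc a b) t := by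
  have : Fact (t ∈ Icc a b) := ⟨ht⟩
  refine intervalIntegral.integral_hasDerivWithinAt_right ?_
    (hG.stronglyMeasurableAtFilter_nhdsWithin measurableSet_Icc t) (hG t ht)
  refine (hG.mono ?_).intervalIntegrable
  rw [uIcc_of_le ht.1]
  exact Icc_subset_Icc le_rfl ht.2

theorem nonpos_of_hasDerivWithinAt_mul_add_nonpos {a b : ℝ} {w G r : ℝ → ℝ}
    (hG : ContinuousOn G (Icc a b))
    (hw : ∀ t ∈ Icc a b, HasDerivWithinAt w (w t * G t + r t) (Icc a b) t)
    (hr : ∀ t ∈ Icc a b, r t ≤ 0) (ha : w a ≤ 0) :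
    ∀ t ∈ Icc a b, w t ≤ 0 := by
  intro t ht
  set E : ℝ → ℝ := fun u => Real.exp (-∫ x in a..u, G x)
  set v : ℝ → ℝ := fun u => w u * E u
  have hv : ∀ u ∈ Icc a b, HasDerivWithinAt v (r u * E u) (Icc a b) u := by
    intro u hu
    exact ((hw u hu).mul (hG.hasDerivWithinAt_integral_Icc hu).neg.exp).congr_deriv
      (by simp only [E, Pi.neg_apply]; ring)
  have hv_anti : AntitoneOn v (Icc a b) := by
    refine antitoneOn_of_hasDerivWithinAt_nonpos (convex_Icc a b)
      (fun u hu => (hv u hu).continuousWithinAt) (f' := fun u => r u * E u) ?_ ?_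
    · intro u hu
      exact (hv u (interior_subset hu)).mono interior_subset
    · intro u hu
      exact mul_nonpos_of_nonpos_of_nonneg (hr u (interior_subset hu)) (Real.exp_pos _).le
  have hva : v a = w a := by simp [v, E]
  have hvt : w t * E t ≤ 0 * E t := by
    simpa [v] using (hv_anti ⟨le_rfl, ht.1.trans ht.2⟩ ht ht.1).trans (hva ▸ ha)
  exact le_of_mul_le_mul_right hvt (Real.exp_pos _)

theorem neg_sq_mul_mul_nonpos {ε c : ℝ} (hε : 0 ≤ ε) (hc : 0 ≤ c) (s : ℝ) :
    -(s ^ 2) * ε * c ≤ 0 := by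
  nlinarith [sq_nonneg s, mul_nonneg hε hc]

/-- For the chart-K¹₁₁ on-sphere system
z₁' = s₁ + 2z₁(s₁ + z₁ + 1 + s₁εc), s₁' = s₁(s₁ + z₁ + 1 + s₁εc) with ε ≥ 0 and
c > 0, the set {(z₁, s₁) : s₁ ≥ 0, s₁ + z₁ ≤ 0} is forward invariant; in
particular, along the line s₁ = −z₁ one has (s₁ + z₁)' = −s₁²εc ≤ 0. -/
theorem chartK111_trapping_halfregion
    (ε c : ℝ) (hε : 0 ≤ ε) (hc : 0 < c) :
    (∀ z s : ℝ, s + z = 0 →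
      (s + 2 * z * (s + z + 1 + s * ε * c)) + (s * (s + z + 1 + s * ε * c)) =
        -(s ^ 2) * ε * c ∧ -(s ^ 2) * ε * c ≤ 0) ∧
    (∀ T : ℝ, ∀ z s : ℝ → ℝ,
      (∀ t ∈ Set.Icc (0 : ℝ) T, HasDerivWithinAt z
        (s t + 2 * z t * (s t + z t + 1 + s t * ε * c)) (Set.Icc 0 T) t) →
      (∀ t ∈ Set.Icc (0 : ℝ) T, HasDerivWithinAt s
        (s t * (s t + z t + 1 + s t * ε * c)) (Set.Icc 0 T) t) →
      0 ≤ s 0 → s 0 + z 0 ≤ 0 →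
      ∀ t ∈ Set.Icc (0 : ℝ) T, 0 ≤ s t ∧ s t + z t ≤ 0) := by
  refine ⟨fun z s hsz => ⟨?_, neg_sq_mul_mul_nonpos hε hc.le s⟩, fun T z s hz hs hs0 hsz0 => ?_⟩
  · rw [show z = -s by linarith]
    ring
  have hs_cont : ContinuousOn s (Icc 0 T) := fun t ht => (hs t ht).continuousWithinAt
  have hz_cont : ContinuousOn z (Icc 0 T) := fun t ht => (hz t ht).continuousWithinAt
  have hs_nonneg : ∀ t ∈ Icc 0 T, -s t ≤ 0 :=
    nonpos_of_hasDerivWithinAt_mul_add_nonpos (w := fun t => -s t)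
      (G := fun t => s t + z t + 1 + s t * ε * c) (r := 0) (by fun_prop)
      (fun t ht => (hs t ht).neg.congr_deriv (by simp))
      (fun _ _ => le_rfl) (neg_nonpos.2 hs0)
  have hsz_nonpos : ∀ t ∈ Icc 0 T, s t + z t ≤ 0 :=
    nonpos_of_hasDerivWithinAt_mul_add_nonpos (w := fun t => s t + z t)
      (G := fun t => 2 * (s t + z t + 1 + s t * ε * c) - s t) (r := fun t => -(s t ^ 2) * ε * c)
      (by fun_prop) (fun t ht => ((hs t ht).add (hz t ht)).congr_deriv (by ring))
      (fun t _ => neg_sq_mul_mul_nonpos hε hc.le (s t)) hsz0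
  exact fun t ht => ⟨neg_nonpos.1 (hs_nonneg t ht), hsz_nonpos t ht⟩
end

section
/- Let ε ≥ 0 and c > 0 and consider the planar system y₂' = −y₂ − z₂ − y₂² − εc·y₂, z₂' = y₂². The set Ω = {(y₂, z₂) : y₂ ≥ 0, y₂ + z₂ ≤ 0} is forward invariant: every solution starting in Ω remains in Ω for all t ≥ 0. In particular, y₂' = −z₂ ≥ 0 on the boundary piece {y₂ = 0, z₂ ≤ 0} and (y₂ + z₂)' = −εc·y₂ ≤ 0 on the boundary piece {z₂ = −y₂, y₂ ≥ 0}. -/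
/-!
In the coordinates `y` and `w = y + z` the system reads `y' = -w - y² - k y`, `w' = -w - k y`
with `k = εc ≥ 0`. The function `V = max (-y) 0 ^ 2 + max w 0 ^ 2` is `C¹`, vanishes exactly on
`Ω`, and on a time interval where `|y| ≤ M` it satisfies `V' ≤ (1 + k + 2M) V`; since `V 0 = 0`,
Grönwall's inequality keeps `V` at zero.
-/

open Set

theorem hasDerivAt_max_zero_sq (x : ℝ) :
    HasDerivAt (fun u : ℝ => max u 0 ^ 2) (2 * max x 0) x := by
  refine hasDerivAt_of_hasDerivAt_of_ne' (g := fun u => 2 * max u 0) (x := 0) (fun u hu => ?_)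
    (by fun_prop) (by fun_prop) x
  rcases hu.lt_or_gt with hu | hu
  · have hzero : (fun v : ℝ => max v 0 ^ 2) =ᶠ[nhds u] fun _ => 0 := by
      filter_upwards [Iio_mem_nhds hu] with v (hv : v < 0)
      simp [max_eq_right hv.le]
    simpa [max_eq_right hu.le] using (hasDerivAt_const u (0 : ℝ)).congr_of_eventuallyEq hzero
  · have hsq : (fun v : ℝ => max v 0 ^ 2) =ᶠ[nhds u] fun v => v ^ 2 := by
      filter_upwards [Ioi_mem_nhds hu] with v (hv : 0 < v)
      simp [max_eq_left hv.le]
    simpa [max_eq_left hu.le] using (hasDerivAt_pow 2 u).congr_of_eventuallyEq hsq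

theorem nonpos_of_deriv_right_le_mul {f f' : ℝ → ℝ} {K a b : ℝ}
    (hf : ContinuousOn f (Icc a b)) (hf' : ∀ x ∈ Ico a b, HasDerivWithinAt f (f' x) (Ici x) x)
    (ha : f a ≤ 0) (bound : ∀ x ∈ Ico a b, f' x ≤ K * f x) :
    ∀ x ∈ Icc a b, f x ≤ 0 := fun x hx =>
  (le_gronwallBound_of_liminf_deriv_right_le hf
    (fun x hx _r hr => (hf' x hx).liminf_right_slope_le hr) ha (by simpa using bound) x hx).trans_eq
    (gronwallBound_ε0_δ0 _ _)

theorem negPart_sq_add_posPart_sq_deriv_le {k M y w : ℝ} (hk : 0 ≤ k) (hM : |y| ≤ M) :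
    2 * max (-y) 0 * (w + y ^ 2 + k * y) + 2 * max w 0 * (-w - k * y) ≤
      (1 + k + 2 * M) * (max (-y) 0 ^ 2 + max w 0 ^ 2) := by
  have hyM : -y ≤ M := (neg_le_abs y).trans hM
  have hM₀ : 0 ≤ M := (abs_nonneg y).trans hM
  rcases le_total y 0 with hy | hy <;> rcases le_total w 0 with hw | hw
  · rw [max_eq_left (neg_nonneg.2 hy), max_eq_right hw]
    nlinarith [mul_nonneg hk (sq_nonneg y), mul_nonneg (neg_nonneg.2 hy) (neg_nonneg.2 hw),
      mul_nonneg (sq_nonneg y) (sub_nonneg.2 hyM)]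
  · rw [max_eq_left (neg_nonneg.2 hy), max_eq_left hw]
    nlinarith [sq_nonneg (y + w), mul_nonneg hk (sq_nonneg (y + w)),
      mul_nonneg (sq_nonneg y) (sub_nonneg.2 hyM)]
  · simp [max_eq_right (neg_nonpos.2 hy), max_eq_right hw]
  · rw [max_eq_right (neg_nonpos.2 hy), max_eq_left hw]
    nlinarith [mul_nonneg (mul_nonneg hk hy) hw, mul_nonneg hk (sq_nonneg w),
      mul_nonneg hM₀ (sq_nonneg w)]

theorem nonneg_and_nonpos_of_hasDerivAt {k : ℝ} (hk : 0 ≤ k) {y w : ℝ → ℝ}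
    (hy : ∀ t ≥ (0 : ℝ), HasDerivAt y (-w t - y t ^ 2 - k * y t) t)
    (hw : ∀ t ≥ (0 : ℝ), HasDerivAt w (-w t - k * y t) t)
    (hy₀ : 0 ≤ y 0) (hw₀ : w 0 ≤ 0) :
    ∀ t ≥ (0 : ℝ), 0 ≤ y t ∧ w t ≤ 0 := by
  intro T hT
  set V : ℝ → ℝ := fun s => max (-y s) 0 ^ 2 + max (w s) 0 ^ 2
  have hV : ∀ s ≥ (0 : ℝ), HasDerivAt V
      (2 * max (-y s) 0 * (w s + y s ^ 2 + k * y s) + 2 * max (w s) 0 * (-w s - k * y s)) s := by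
    intro s hs
    exact (((hasDerivAt_max_zero_sq _).comp s (hy s hs).neg).add
      ((hasDerivAt_max_zero_sq _).comp s (hw s hs))).congr_deriv
      (by simp only [Pi.neg_apply]; ring)
  obtain ⟨M, hM⟩ := isCompact_Icc.exists_bound_of_continuousOn
    (fun s hs => (hy s hs.1).continuousAt.continuousWithinAt : ContinuousOn y (Icc 0 T))
  have hVT : V T ≤ 0 := by
    refine nonpos_of_deriv_right_le_mul (K := 1 + k + 2 * M)
      (fun s hs => (hV s hs.1).continuousAt.continuousWithinAt)
      (fun s hs => (hV s hs.1).hasDerivWithinAt) (by simp [V, hy₀, hw₀]) (fun s hs => ?_)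
      T ⟨hT, le_rfl⟩
    exact negPart_sq_add_posPart_sq_deriv_le hk (hM s (Ico_subset_Icc_self hs))
  obtain ⟨hneg, hpos⟩ := (add_eq_zero_iff_of_nonneg (sq_nonneg _) (sq_nonneg _)).1
    (le_antisymm hVT (by positivity))
  exact ⟨by simpa using hneg, by simpa using hpos⟩

/-- For the scaling-chart system y₂' = −y₂ − z₂ − y₂² − εc·y₂, z₂' = y₂² with
ε ≥ 0 and c > 0, the set Ω = {(y₂, z₂) : y₂ ≥ 0, y₂ + z₂ ≤ 0} is forward
invariant; in particular y₂' = −z₂ ≥ 0 on the boundary piece {y₂ = 0, z₂ ≤ 0},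
and (y₂ + z₂)' = −εc·y₂ ≤ 0 on the boundary piece {z₂ = −y₂, y₂ ≥ 0}. -/
theorem chartK112_Omega_forward_invariant
    (ε c : ℝ) (hε : 0 ≤ ε) (hc : 0 < c) :
    (∀ z₂ : ℝ, z₂ ≤ 0 →
      -(0 : ℝ) - z₂ - (0 : ℝ) ^ 2 - ε * c * 0 = -z₂ ∧ 0 ≤ -z₂) ∧
    (∀ y₂ : ℝ, 0 ≤ y₂ →
      (-y₂ - (-y₂) - y₂ ^ 2 - ε * c * y₂) + y₂ ^ 2 = -(ε * c * y₂) ∧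
      -(ε * c * y₂) ≤ 0) ∧
    (∀ y z : ℝ → ℝ,
      (∀ t ≥ (0 : ℝ), HasDerivAt y (-y t - z t - (y t) ^ 2 - ε * c * y t) t) →
      (∀ t ≥ (0 : ℝ), HasDerivAt z ((y t) ^ 2) t) →
      0 ≤ y 0 → y 0 + z 0 ≤ 0 →
      ∀ t ≥ (0 : ℝ), 0 ≤ y t ∧ y t + z t ≤ 0) := by
  have hk : 0 ≤ ε * c := mul_nonneg hε hc.le
  refine ⟨fun z₂ hz₂ => ⟨by ring, by linarith⟩, fun y₂ hy₂ => ⟨by ring, ?_⟩, ?_⟩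
  · exact neg_nonpos.2 (mul_nonneg hk hy₂)
  intro y z hy hz hy₀ hw₀
  refine nonneg_and_nonpos_of_hasDerivAt hk (w := y + z) (fun t ht => ?_) (fun t ht => ?_) hy₀ hw₀
  · exact (hy t ht).congr_deriv (by simp only [Pi.add_apply]; ring)
  · exact ((hy t ht).add (hz t ht)).congr_deriv (by simp only [Pi.add_apply]; ring)
end

section
/- Let ε ≥ 0 and c > 0 and consider the planar system y₂' = −y₂ − z₂ − y₂² − εc·y₂, z₂' = y₂². Every solution with initial value satisfying y₂(0) > 0 and y₂(0) + z₂(0) < 0 exists for all t ≥ 0 and converges to the equilibrium Q₂ = (0, 0) as t → ∞. -/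
/-!
Write `a = εc ≥ 0`, `k = 1 + a` and `S = y₂ + z₂`. Then `z₂' = y₂² ≥ 0` and `S' = -kS + a z₂`, so
`e^{kt} S` decreases as long as `z₂ ≤ 0`; hence `S < 0`, and then `y₂ ≥ 0` because `y₂' = -S > 0`
wherever `y₂ = 0`. At a first zero of `z₂` this would give `z₂ = S - y₂ < 0`, so `z₂` stays
negative and increases to a limit `L`. The linear equation for `S` forces `S → aL/k`, hence
`y₂ → -L/k`, and `z₂' = y₂² → L²/k²` must vanish because `z₂` converges: `L = 0`.
Global existence follows from the a priori bound `‖(y₂, z₂)‖ ≤ -z₂(0)`, by solving the system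
with its vector field clamped outside a larger ball.
-/

open Set Filter Topology
open scoped NNReal

theorem monotoneOn_Icc_of_hasDerivAt_nonneg {f f' : ℝ → ℝ} {a b : ℝ}
    (hf : ContinuousOn f (Icc a b)) (hf' : ∀ t ∈ Ioo a b, HasDerivAt f (f' t) t)
    (hf'₀ : ∀ t ∈ Ioo a b, 0 ≤ f' t) : MonotoneOn f (Icc a b) :=
  monotoneOn_of_hasDerivWithinAt_nonneg (convex_Icc a b) hf
    (by simpa only [interior_Icc] using fun t ht ↦ (hf' t ht).hasDerivWithinAt)
    (by simpa only [interior_Icc] using hf'₀)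

theorem antitoneOn_Icc_of_hasDerivAt_nonpos {f f' : ℝ → ℝ} {a b : ℝ}
    (hf : ContinuousOn f (Icc a b)) (hf' : ∀ t ∈ Ioo a b, HasDerivAt f (f' t) t)
    (hf'₀ : ∀ t ∈ Ioo a b, f' t ≤ 0) : AntitoneOn f (Icc a b) :=
  antitoneOn_of_hasDerivWithinAt_nonpos (convex_Icc a b) hf
    (by simpa only [interior_Icc] using fun t ht ↦ (hf' t ht).hasDerivWithinAt)
    (by simpa only [interior_Icc] using hf'₀)

theorem MonotoneOn.exists_tendsto_atTop {f : ℝ → ℝ} {a : ℝ} (hf : MonotoneOn f (Ici a))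
    (hb : BddAbove (f '' Ici a)) : ∃ L, Tendsto f atTop (𝓝 L) := by
  have hmono : Monotone fun t ↦ f (max a t) := fun s t hst ↦
    hf (le_max_left a s) (le_max_left a t) (max_le_max_left a hst)
  have hbdd : BddAbove (range fun t ↦ f (max a t)) :=
    hb.mono (range_subset_iff.2 fun t ↦ mem_image_of_mem f (le_max_left a t))
  refine ⟨_, (tendsto_atTop_ciSup hmono hbdd).congr' ?_⟩
  filter_upwards [eventually_ge_atTop a] with t ht
  rw [max_eq_right ht]

theorem eventually_lt_of_hasDerivAt_neg_mul_add {S u : ℝ → ℝ} {k v b : ℝ} (hk : 0 < k)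
    (hS : ∀ᶠ t in atTop, HasDerivAt S (-k * S t + u t) t) (hu : ∀ᶠ t in atTop, u t ≤ v)
    (hvb : v < k * b) : ∀ᶠ t in atTop, S t < b := by
  obtain ⟨T, hT⟩ := eventually_atTop.1 (hS.and hu)
  set W : ℝ → ℝ := fun t ↦ Real.exp (k * t) * (S t - v / k)
  have hW (t : ℝ) (ht : T ≤ t) : HasDerivAt W (Real.exp (k * t) * (u t - v)) t :=
    (((hasDerivAt_id' t).const_mul k).exp.mul ((hT t ht).1.sub_const (v / k))).congr_deriv
      (by field_simp; ring)
  have hdecay : Tendsto (fun t ↦ Real.exp (-(k * t)) * W T) atTop (𝓝 0) := by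
    simpa using (Real.tendsto_exp_atBot.comp
      (tendsto_neg_atTop_atBot.comp (tendsto_id.const_mul_atTop hk))).mul_const (W T)
  have hgap : 0 < b - v / k := by rw [sub_pos, div_lt_iff₀ hk]; linarith
  filter_upwards [hdecay.eventually_lt_const hgap, eventually_ge_atTop T] with t hsmall ht
  have hWt : W t ≤ W T :=
    antitoneOn_Icc_of_hasDerivAt_nonpos (fun s hs ↦ (hW s hs.1).continuousAt.continuousWithinAt)
      (fun s hs ↦ hW s hs.1.le)
      (fun s hs ↦ mul_nonpos_of_nonneg_of_nonpos (Real.exp_pos _).le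
        (by linarith [(hT s hs.1.le).2]))
      (left_mem_Icc.2 ht) (right_mem_Icc.2 ht) ht
  have hSt : S t - v / k = Real.exp (-(k * t)) * W t := by
    simp only [W, ← mul_assoc, ← Real.exp_add, neg_add_cancel, Real.exp_zero, one_mul]
  nlinarith [Real.exp_pos (-(k * t))]

theorem tendsto_of_hasDerivAt_neg_mul_add {S u : ℝ → ℝ} {k l : ℝ} (hk : 0 < k)
    (hS : ∀ᶠ t in atTop, HasDerivAt S (-k * S t + u t) t) (hu : Tendsto u atTop (𝓝 l)) :
    Tendsto S atTop (𝓝 (l / k)) := by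
  rw [tendsto_order]
  constructor
  · intro b hb
    rw [lt_div_iff₀ hk] at hb
    have hS' : ∀ᶠ t in atTop, HasDerivAt (-S) (-k * (-S) t + (-u) t) t :=
      hS.mono fun t h ↦ h.neg.congr_deriv (by simp only [Pi.neg_apply]; ring)
    have hu' : ∀ᶠ t in atTop, (-u) t ≤ -((k * b + l) / 2) :=
      (hu.eventually (le_mem_nhds (by linarith))).mono fun t h ↦ neg_le_neg h
    filter_upwards [eventually_lt_of_hasDerivAt_neg_mul_add hk hS' hu' (by linarith : _ < k * -b)]
      with t ht
    rw [Pi.neg_apply] at ht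
    linarith
  · intro b hb
    rw [gt_iff_lt, div_lt_iff₀ hk] at hb
    exact eventually_lt_of_hasDerivAt_neg_mul_add hk hS
      (hu.eventually (ge_mem_nhds (by linarith : l < (l + b * k) / 2))) (by linarith)

theorem tendsto_atTop_of_hasDerivAt_ge {f f' : ℝ → ℝ} {r : ℝ} (hr : 0 < r)
    (hf : ∀ᶠ t in atTop, HasDerivAt f (f' t) t) (hf' : ∀ᶠ t in atTop, r ≤ f' t) :
    Tendsto f atTop atTop := by
  obtain ⟨T, hT⟩ := eventually_atTop.1 (hf.and hf')
  have hd (t : ℝ) (ht : T ≤ t) : HasDerivAt (fun t ↦ f t - r * t) (f' t - r) t :=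
    ((hT t ht).1.sub ((hasDerivAt_id' t).const_mul r)).congr_deriv (by rw [mul_one])
  refine tendsto_atTop_mono' _ ?_
    (tendsto_atTop_add_const_left _ (f T - r * T) (tendsto_id.const_mul_atTop hr))
  filter_upwards [eventually_ge_atTop T] with t ht
  have h := monotoneOn_Icc_of_hasDerivAt_nonneg
    (fun s hs ↦ (hd s hs.1).continuousAt.continuousWithinAt) (fun s hs ↦ hd s hs.1.le)
    (fun s hs ↦ sub_nonneg.2 (hT s hs.1.le).2) (left_mem_Icc.2 ht) (right_mem_Icc.2 ht) ht
  dsimp only [id_eq] at h ⊢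
  linarith

theorem nonpos_of_tendsto_of_hasDerivAt_tendsto {f f' : ℝ → ℝ} {L c : ℝ}
    (hf : Tendsto f atTop (𝓝 L)) (hdf : ∀ᶠ t in atTop, HasDerivAt f (f' t) t)
    (hf' : Tendsto f' atTop (𝓝 c)) : c ≤ 0 := by
  by_contra! hc
  exact not_tendsto_nhds_of_tendsto_atTop (tendsto_atTop_of_hasDerivAt_ge (half_pos hc) hdf
    (hf'.eventually (le_mem_nhds (half_lt_self hc)))) L hf

section GlobalExistence

variable {E : Type*} [NormedAddCommGroup E] [NormedSpace ℝ E] [CompleteSpace E]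

theorem exists_hasDerivAt_of_lipschitzWith_of_norm_le {F : E → E} {K C : ℝ≥0}
    (hF : LipschitzWith K F) (hC : ∀ x, ‖F x‖ ≤ C) (x₀ : E) :
    ∃ g : ℝ → E, g 0 = x₀ ∧ ∀ t, HasDerivAt g (F (g t)) t := by
  have hloc (n : ℕ) : ∃ α : ℝ → E, α 0 = x₀ ∧
      ∀ t : ℝ, |t| < n + 1 → HasDerivAt α (F (α t)) t := by
    have hPL : IsPicardLindelof (fun _ ↦ F) (tmin := -((n : ℝ) + 1)) (tmax := n + 1)
        ⟨0, by constructor <;> linarith [(n.cast_nonneg : (0 : ℝ) ≤ n)]⟩ x₀ (C * (n + 1)) 0 C K :=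
      .of_time_independent (fun x _ ↦ hC x) hF.lipschitzOnWith (by simp)
    obtain ⟨α, hα0, hα⟩ := hPL.exists_eq_forall_mem_Icc_hasDerivWithinAt₀
    refine ⟨α, hα0, fun t ht ↦ ?_⟩
    rw [abs_lt] at ht
    exact (hα t ⟨ht.1.le, ht.2.le⟩).hasDerivAt (Icc_mem_nhds ht.1 ht.2)
  choose α hα0 hα using hloc
  have hagree (n m : ℕ) (t : ℝ) (hn : |t| < n + 1) (hm : |t| < m + 1) : α n t = α m t := by
    set r := min ((n : ℝ) + 1) (m + 1)
    have hr : |t| < r := lt_min hn hm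
    have hsol (l : ℕ) (hl : r ≤ l + 1) (u : ℝ) (hu : u ∈ Ioo (-r) r) :
        HasDerivAt (α l) (F (α l u)) u ∧ α l u ∈ univ :=
      ⟨hα l u ((abs_lt.2 hu).trans_le hl), trivial⟩
    refine ODE_solution_unique_of_mem_Ioo (s := fun _ ↦ univ) (fun _ _ ↦ hF.lipschitzOnWith)
      (t₀ := 0) ?_ (hsol n (min_le_left _ _)) (hsol m (min_le_right _ _))
      (by rw [hα0, hα0]) (abs_lt.1 hr)
    constructor <;> linarith [(abs_nonneg t).trans_lt hr]
  refine ⟨fun t ↦ α ⌊|t|⌋₊ t, by simpa using hα0 0, fun t ↦ ?_⟩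
  have hnear : ∀ᶠ u in 𝓝 t, |u| < (⌊|t|⌋₊ : ℝ) + 1 :=
    (continuous_abs.tendsto t).eventually_lt_const (Nat.lt_floor_add_one _)
  refine (hα _ t (Nat.lt_floor_add_one _)).congr_of_eventuallyEq ?_
  filter_upwards [hnear] with u hu
  exact hagree _ _ u (Nat.lt_floor_add_one _) hu

end GlobalExistence

theorem forall_mem_of_forall_Ico_mem {X : Type*} [TopologicalSpace X] {g : ℝ → X} {U : Set X}
    (hU : IsOpen U) (hg : ContinuousOn g (Ici 0))
    (h : ∀ T ≥ 0, (∀ t ∈ Ico 0 T, g t ∈ U) → g T ∈ U) : ∀ t ≥ 0, g t ∈ U := by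
  by_contra! ⟨t₁, ht₁, hout⟩
  set B := Icc 0 t₁ ∩ g ⁻¹' Uᶜ
  have hB : IsClosed B :=
    (hg.mono Icc_subset_Ici_self).preimage_isClosed_of_isClosed isClosed_Icc hU.isClosed_compl
  have hBbdd : BddBelow B := ⟨0, fun t ht ↦ ht.1.1⟩
  have hτ : sInf B ∈ B := hB.csInf_mem ⟨t₁, ⟨ht₁, le_rfl⟩, hout⟩ hBbdd
  refine hτ.2 (h _ hτ.1.1 fun t ht ↦ ?_)
  by_contra hgt
  exact (csInf_le hBbdd ⟨⟨ht.1, ht.2.le.trans hτ.1.2⟩, hgt⟩).not_gt ht.2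

theorem exists_lipschitzWith_bounded_eqOn_closedBall {f : ℝ × ℝ → ℝ × ℝ} (hf : LocallyLipschitz f)
    {R : ℝ} (hR : 0 ≤ R) :
    ∃ (F : ℝ × ℝ → ℝ × ℝ) (K C : ℝ≥0), LipschitzWith K F ∧ (∀ p, ‖F p‖ ≤ C) ∧
      EqOn F f (Metric.closedBall 0 R) := by
  set clamp : ℝ → ℝ := fun x ↦ max (-R) (min x R)
  have hclamp (x : ℝ) : |clamp x| ≤ R :=
    abs_le.2 ⟨le_max_left _ _, max_le (by linarith) (min_le_right _ _)⟩
  set π : ℝ × ℝ → ℝ × ℝ := fun p ↦ (clamp p.1, clamp p.2)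
  have hπ : LipschitzWith (max 1 1) π :=
    ((LipschitzWith.prod_fst.min_const R).const_max (-R)).prodMk
      ((LipschitzWith.prod_snd.min_const R).const_max (-R))
  have hπR : MapsTo π univ (Metric.closedBall 0 R) := fun p _ ↦ by
    simpa [Prod.norm_def] using ⟨hclamp p.1, hclamp p.2⟩
  have hπid : EqOn π id (Metric.closedBall 0 R) := fun p hp ↦ by
    simp only [Metric.mem_closedBall, dist_zero_right, Prod.norm_def, Real.norm_eq_abs,
      max_le_iff, abs_le] at hp
    simp [π, clamp, hp]
  obtain ⟨K, hK⟩ := hf.locallyLipschitzOn.exists_lipschitzOnWith_of_compact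
    (isCompact_closedBall (0 : ℝ × ℝ) R)
  obtain ⟨C, hC⟩ := (isCompact_closedBall (0 : ℝ × ℝ) R).exists_bound_of_continuousOn
    hf.continuous.continuousOn
  refine ⟨f ∘ π, K * max 1 1, C.toNNReal, lipschitzOnWith_univ.1 (hK.comp hπ.lipschitzOnWith hπR),
    fun p ↦ (hC _ (hπR trivial)).trans (Real.le_coe_toNNReal C), fun p hp ↦ ?_⟩
  simp [hπid hp]

theorem exists_forall_hasDerivAt_of_mem_ball {f : ℝ × ℝ → ℝ × ℝ} (hf : LocallyLipschitz f)
    {R : ℝ} (hR : 0 ≤ R) (x₀ : ℝ × ℝ)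
    (hball : ∀ T ≥ 0, ∀ g : ℝ → ℝ × ℝ, g 0 = x₀ → ContinuousOn g (Icc 0 T) →
      (∀ t ∈ Ico 0 T, g t ∈ Metric.ball 0 R ∧ HasDerivAt g (f (g t)) t) →
      g T ∈ Metric.ball 0 R) :
    ∃ g : ℝ → ℝ × ℝ, g 0 = x₀ ∧ ∀ t ≥ 0, HasDerivAt g (f (g t)) t := by
  obtain ⟨F, K, C, hFK, hFC, hFf⟩ := exists_lipschitzWith_bounded_eqOn_closedBall hf hR
  obtain ⟨g, hg0, hg⟩ := exists_hasDerivAt_of_lipschitzWith_of_norm_le hFK hFC x₀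
  have hsolves {t : ℝ} (ht : g t ∈ Metric.ball 0 R) : HasDerivAt g (f (g t)) t :=
    hFf (Metric.ball_subset_closedBall ht) ▸ hg t
  have hgc : Continuous g := continuous_iff_continuousAt.2 fun t ↦ (hg t).continuousAt
  have hin := forall_mem_of_forall_Ico_mem Metric.isOpen_ball hgc.continuousOn
    fun T hT hin ↦ hball T hT g hg0 hgc.continuousOn fun t ht ↦ ⟨hin t ht, hsolves (hin t ht)⟩
  exact ⟨g, hg0, fun t ht ↦ hsolves (hin t ht)⟩

namespace ChartK112

def field (a : ℝ) (p : ℝ × ℝ) : ℝ × ℝ := (-p.1 - p.2 - p.1 ^ 2 - a * p.1, p.1 ^ 2)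

theorem hasDerivAt_of_hasDerivAt_field {a t : ℝ} {g : ℝ → ℝ × ℝ}
    (h : HasDerivAt g (field a (g t)) t) :
    HasDerivAt (fun s ↦ (g s).1) (-(g t).1 - (g t).2 - (g t).1 ^ 2 - a * (g t).1) t ∧
      HasDerivAt (fun s ↦ (g s).2) ((g t).1 ^ 2) t :=
  ⟨hasFDerivAt_fst.comp_hasDerivAt (f := g) t h, hasFDerivAt_snd.comp_hasDerivAt (f := g) t h⟩

structure IsSolutionOn (a T : ℝ) (y z : ℝ → ℝ) : Prop where
  continuousOn_y : ContinuousOn y (Icc 0 T)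
  continuousOn_z : ContinuousOn z (Icc 0 T)
  hasDerivAt_y : ∀ t ∈ Ico 0 T, HasDerivAt y (-y t - z t - y t ^ 2 - a * y t) t
  hasDerivAt_z : ∀ t ∈ Ico 0 T, HasDerivAt z (y t ^ 2) t

namespace IsSolutionOn

variable {a T : ℝ} {y z : ℝ → ℝ}

theorem mono (h : IsSolutionOn a T y z) {τ : ℝ} (hτ : τ ≤ T) : IsSolutionOn a τ y z where
  continuousOn_y := h.continuousOn_y.mono (Icc_subset_Icc_right hτ)
  continuousOn_z := h.continuousOn_z.mono (Icc_subset_Icc_right hτ)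
  hasDerivAt_y t ht := h.hasDerivAt_y t (Ico_subset_Ico_right hτ ht)
  hasDerivAt_z t ht := h.hasDerivAt_z t (Ico_subset_Ico_right hτ ht)

theorem monotoneOn_z (h : IsSolutionOn a T y z) : MonotoneOn z (Icc 0 T) :=
  monotoneOn_Icc_of_hasDerivAt_nonneg h.continuousOn_z
    (fun t ht ↦ h.hasDerivAt_z t (Ioo_subset_Ico_self ht)) fun _ _ ↦ sq_nonneg _

theorem y_add_z_neg (h : IsSolutionOn a T y z) (ha : 0 ≤ a) (h0 : y 0 + z 0 < 0)
    (hz : ∀ t ∈ Icc 0 T, z t ≤ 0) : ∀ t ∈ Icc 0 T, y t + z t < 0 := by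
  have hV (t : ℝ) (ht : t ∈ Ico 0 T) : HasDerivAt (fun s ↦ Real.exp ((1 + a) * s) * (y s + z s))
      (Real.exp ((1 + a) * t) * (a * z t)) t :=
    (((hasDerivAt_id' t).const_mul (1 + a)).exp.mul
      ((h.hasDerivAt_y t ht).add (h.hasDerivAt_z t ht))).congr_deriv (by rw [Pi.add_apply]; ring)
  have hVc : ContinuousOn (fun s ↦ Real.exp ((1 + a) * s) * (y s + z s)) (Icc 0 T) := by
    have := h.continuousOn_y
    have := h.continuousOn_z
    fun_prop
  have hanti := antitoneOn_Icc_of_hasDerivAt_nonpos hVc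
    (fun t ht ↦ hV t (Ioo_subset_Ico_self ht)) fun t ht ↦
      mul_nonpos_of_nonneg_of_nonpos (Real.exp_pos _).le
        (mul_nonpos_of_nonneg_of_nonpos ha (hz t (Ioo_subset_Icc_self ht)))
  intro t ht
  have hle := hanti ⟨le_rfl, ht.1.trans ht.2⟩ ht ht.1
  simp only [mul_zero, Real.exp_zero, one_mul] at hle
  exact neg_of_mul_neg_right (hle.trans_lt h0) (Real.exp_pos _).le

theorem y_nonneg (h : IsSolutionOn a T y z) (hy0 : 0 ≤ y 0)
    (hS : ∀ t ∈ Icc 0 T, y t + z t < 0) : ∀ t ∈ Icc 0 T, 0 ≤ y t := by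
  intro t ht
  have := image_le_of_deriv_right_lt_deriv_boundary (B := fun _ ↦ 0) (B' := fun _ ↦ 0)
    h.continuousOn_y.neg (fun s hs ↦ (h.hasDerivAt_y s hs).neg.hasDerivWithinAt)
    (neg_nonpos.2 hy0) (fun _ ↦ hasDerivAt_const _ _) (fun s hs hys ↦ ?_) ht
  · exact neg_nonpos.1 this
  · have hy : y s = 0 := neg_eq_zero.1 hys
    have := hS s (Ico_subset_Icc_self hs)
    simp only [hy] at this ⊢
    linarith

theorem z_neg (h : IsSolutionOn a T y z) (ha : 0 ≤ a) (hy0 : 0 ≤ y 0) (h0 : y 0 + z 0 < 0) :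
    ∀ t ∈ Icc 0 T, z t < 0 := by
  intro t ht
  by_contra! hzt
  obtain ⟨τ, hτ, hzτ⟩ := intermediate_value_Icc ht.1
    (h.continuousOn_z.mono (Icc_subset_Icc_right ht.2)) ⟨by linarith, hzt⟩
  have hτ' : IsSolutionOn a τ y z := h.mono (hτ.2.trans ht.2)
  have hτmem : τ ∈ Icc 0 τ := right_mem_Icc.2 hτ.1
  have hS := hτ'.y_add_z_neg ha h0 fun s hs ↦ hzτ ▸ hτ'.monotoneOn_z hs hτmem hs.2
  linarith [hS τ hτmem, hτ'.y_nonneg hy0 hS τ hτmem]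

theorem norm_le (h : IsSolutionOn a T y z) (ha : 0 ≤ a) (hy0 : 0 ≤ y 0) (h0 : y 0 + z 0 < 0) :
    ∀ t ∈ Icc 0 T, ‖(y t, z t)‖ ≤ -z 0 := by
  intro t ht
  have hS := h.y_add_z_neg ha h0 fun s hs ↦ (h.z_neg ha hy0 h0 s hs).le
  have hz0 : z 0 ≤ z t := h.monotoneOn_z ⟨le_rfl, ht.1.trans ht.2⟩ ht ht.1
  rw [Prod.norm_mk, Real.norm_eq_abs, Real.norm_eq_abs, abs_of_nonneg (h.y_nonneg hy0 hS t ht),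
    abs_of_neg (h.z_neg ha hy0 h0 t ht)]
  exact max_le (by linarith [hS t ht]) (by linarith)

end IsSolutionOn

variable {a : ℝ} {y z : ℝ → ℝ}

theorem tendsto_zero (ha : 0 ≤ a) (hy0 : 0 ≤ y 0) (h0 : y 0 + z 0 < 0)
    (hy : ∀ t ≥ (0 : ℝ), HasDerivAt y (-y t - z t - y t ^ 2 - a * y t) t)
    (hz : ∀ t ≥ (0 : ℝ), HasDerivAt z (y t ^ 2) t) :
    Tendsto (fun t ↦ (y t, z t)) atTop (𝓝 (0, 0)) := by
  have hsol (T : ℝ) : IsSolutionOn a T y z :=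
    ⟨fun t ht ↦ (hy t ht.1).continuousAt.continuousWithinAt,
      fun t ht ↦ (hz t ht.1).continuousAt.continuousWithinAt,
      fun t ht ↦ hy t ht.1, fun t ht ↦ hz t ht.1⟩
  have hmono : MonotoneOn z (Ici 0) := fun s hs t ht hst ↦
    (hsol t).monotoneOn_z ⟨hs, hst⟩ ⟨ht, le_rfl⟩ hst
  obtain ⟨L, hzL⟩ := hmono.exists_tendsto_atTop
    ⟨0, forall_mem_image.2 fun t ht ↦ ((hsol t).z_neg ha hy0 h0 t ⟨ht, le_rfl⟩).le⟩
  have hS : Tendsto (fun t ↦ y t + z t) atTop (𝓝 (a * L / (1 + a))) :=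
    tendsto_of_hasDerivAt_neg_mul_add (by linarith)
      ((eventually_ge_atTop 0).mono fun t ht ↦
        ((hy t ht).add (hz t ht)).congr_deriv (by ring)) (hzL.const_mul a)
  have hyL : Tendsto y atTop (𝓝 (-L / (1 + a))) := by
    convert hS.sub hzL using 2
    · ring
    · field_simp
      ring
  have hL : -L / (1 + a) = 0 := pow_eq_zero_iff two_ne_zero |>.1 <| le_antisymm
    (nonpos_of_tendsto_of_hasDerivAt_tendsto hzL ((eventually_ge_atTop 0).mono hz) (hyL.pow 2))
    (sq_nonneg _)
  have hL0 : L = 0 := by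
    rw [div_eq_zero_iff] at hL
    rcases hL with hL | hL <;> linarith
  rw [hL] at hyL
  rw [hL0] at hzL
  exact hyL.prodMk_nhds hzL

theorem exists_solution (ha : 0 ≤ a) {y₀ z₀ : ℝ} (hy₀ : 0 ≤ y₀) (h0 : y₀ + z₀ < 0) :
    ∃ y z : ℝ → ℝ, y 0 = y₀ ∧ z 0 = z₀ ∧
      (∀ t ≥ (0 : ℝ), HasDerivAt y (-y t - z t - y t ^ 2 - a * y t) t) ∧
      ∀ t ≥ (0 : ℝ), HasDerivAt z (y t ^ 2) t := by
  have hfield : ContDiff ℝ 1 (field a) := by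
    unfold field
    fun_prop
  obtain ⟨g, hg0, hg⟩ := exists_forall_hasDerivAt_of_mem_ball hfield.locallyLipschitz (R := 1 - z₀)
    (by linarith) (y₀, z₀) fun T hT g hg0 hgc hgd ↦ by
      have hsol : IsSolutionOn a T (fun t ↦ (g t).1) (fun t ↦ (g t).2) :=
        ⟨hgc.fst, hgc.snd, fun t ht ↦ (hasDerivAt_of_hasDerivAt_field (hgd t ht).2).1,
          fun t ht ↦ (hasDerivAt_of_hasDerivAt_field (hgd t ht).2).2⟩
      have := hsol.norm_le ha (by simpa [hg0]) (by simpa [hg0]) T ⟨hT, le_rfl⟩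
      rw [mem_ball_zero_iff]
      simp only [Prod.mk.eta, hg0] at this
      linarith
  exact ⟨fun t ↦ (g t).1, fun t ↦ (g t).2, by simp [hg0], by simp [hg0],
    fun t ht ↦ (hasDerivAt_of_hasDerivAt_field (hg t ht)).1,
    fun t ht ↦ (hasDerivAt_of_hasDerivAt_field (hg t ht)).2⟩

end ChartK112

/-- For the scaling-chart system y₂' = −y₂ − z₂ − y₂² − εc·y₂, z₂' = y₂² with
ε ≥ 0, c > 0: every solution with initial value satisfying y₂(0) > 0 and
y₂(0) + z₂(0) < 0 exists for all t ≥ 0 and converges to the equilibrium (0,0).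
Stated as: (i) there exists a global forward solution with these initial values
converging to (0,0), and (ii) every global forward solution with these initial
values converges to (0,0). -/
theorem chartK112_convergence_to_Q2
    (ε c : ℝ) (hε : 0 ≤ ε) (hc : 0 < c)
    (y₀ z₀ : ℝ) (hy₀ : 0 < y₀) (hsum : y₀ + z₀ < 0) :
    (∃ y z : ℝ → ℝ, y 0 = y₀ ∧ z 0 = z₀ ∧
      (∀ t ≥ (0 : ℝ), HasDerivAt y (-y t - z t - (y t) ^ 2 - ε * c * y t) t) ∧
      (∀ t ≥ (0 : ℝ), HasDerivAt z ((y t) ^ 2) t) ∧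
      Filter.Tendsto (fun t => (y t, z t)) Filter.atTop
        (nhds ((0 : ℝ), (0 : ℝ)))) ∧
    (∀ y z : ℝ → ℝ, y 0 = y₀ → z 0 = z₀ →
      (∀ t ≥ (0 : ℝ), HasDerivAt y (-y t - z t - (y t) ^ 2 - ε * c * y t) t) →
      (∀ t ≥ (0 : ℝ), HasDerivAt z ((y t) ^ 2) t) →
      Filter.Tendsto (fun t => (y t, z t)) Filter.atTop
        (nhds ((0 : ℝ), (0 : ℝ)))) := by
  have ha : 0 ≤ ε * c := mul_nonneg hε hc.le
  have hconv (y z : ℝ → ℝ) (hy0 : y 0 = y₀) (hz0 : z 0 = z₀) :=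
    ChartK112.tendsto_zero (y := y) (z := z) ha (hy0 ▸ hy₀.le) (by rwa [hy0, hz0])
  obtain ⟨y, z, hy0, hz0, hy, hz⟩ := ChartK112.exists_solution ha hy₀.le hsum
  exact ⟨⟨y, z, hy0, hz0, hy, hz, hconv y z hy0 hz0 hy hz⟩,
    fun y z hy0 hz0 ↦ hconv y z hy0 hz0⟩
end

section
/- Let c > 0 and set g(y₂, z₂) := c − y₂² − y₂z₂. For every y₂ > 0, one has g(y₂, z₂) = 0 if and only if z₂ = c/y₂ − y₂; moreover, at every such point the partial derivative ∂g/∂y₂ = −2y₂ − z₂ equals −(y₂ + c/y₂), which is at most −2√c < 0. Hence the branch {(y₂, c/y₂ − y₂) : y₂ > 0} of the critical manifold of the region-B₃ on-sphere layer problem is normally hyperbolic and attracting. -/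
/-! For `y > 0` the slow-manifold equation `c - y² - y z = 0` is linear in `z`, so it is solved by
`z = c / y - y`. On that branch the normal derivative `-2y - z` simplifies to `-(y + c / y)`, and
AM–GM bounds `y + c / y` below by `2 √c > 0`. -/

lemma sub_sq_sub_mul_eq_zero_iff {K : Type*} [Field K] {c y : K} (hy : y ≠ 0) (z : K) :
    c - y ^ 2 - y * z = 0 ↔ z = c / y - y := by
  rw [eq_sub_iff_add_eq, eq_div_iff hy, sub_sub, sub_eq_zero]
  constructor <;> intro h <;> linear_combination -h

lemma hasDerivAt_const_sub_sq_sub_mul {𝕜 : Type*} [NontriviallyNormedField 𝕜] (c k y : 𝕜) :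
    HasDerivAt (fun w => c - w ^ 2 - w * k) (-(2 * y) - k) y :=
  (((hasDerivAt_pow 2 y).const_sub c).sub ((hasDerivAt_id' y).mul_const k)).congr_deriv
    (by norm_num)

lemma two_mul_sqrt_le_add_div {c y : ℝ} (hc : 0 ≤ c) (hy : 0 < y) :
    2 * Real.sqrt c ≤ y + c / y := by
  have hs : Real.sqrt c ^ 2 = c := Real.sq_sqrt hc
  rw [← mul_le_mul_iff_of_pos_right hy, add_mul, div_mul_cancel₀ c hy.ne']
  nlinarith [sq_nonneg (y - Real.sqrt c)]

/-- For c > 0 and g(y₂, z₂) = c − y₂² − y₂z₂: for every y₂ > 0, g(y₂, z₂) = 0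
iff z₂ = c/y₂ − y₂; at such points the partial derivative ∂g/∂y₂ = −2y₂ − z₂
equals −(y₂ + c/y₂), which is at most −2√c < 0.  Hence the branch
{(y₂, c/y₂ − y₂) : y₂ > 0} of the region-B₃ on-sphere critical manifold is
normally hyperbolic and attracting. -/
theorem regionB3_critical_branch_attracting
    (c : ℝ) (hc : 0 < c) :
    ∀ y : ℝ, 0 < y →
      (∀ z : ℝ, c - y ^ 2 - y * z = 0 ↔ z = c / y - y) ∧
      HasDerivAt (fun w => c - w ^ 2 - w * (c / y - y))
        (-(2 * y) - (c / y - y)) y ∧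
      -(2 * y) - (c / y - y) = -(y + c / y) ∧
      -(y + c / y) ≤ -(2 * Real.sqrt c) ∧
      -(2 * Real.sqrt c) < 0 := fun y hy =>
  ⟨sub_sq_sub_mul_eq_zero_iff hy.ne',
    hasDerivAt_const_sub_sq_sub_mul c (c / y - y) y,
    by ring,
    neg_le_neg (two_mul_sqrt_le_add_div hc.le hy),
    neg_lt_zero.mpr (by positivity)⟩
end
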